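/- arXiv:1311.6317 — 6 statements merged into one kernel-verified Lean document; each statement's English description precedes it below -/
import Mathlib

section
/- Let k be an algebraically closed field of characteristic p > 0 and let α = (α_n) be a digit sequence. Then there exist units u_n of the subring k[t,t⁻¹]^{p^n} ⊆ k[t,t⁻¹] satisfying t^{α_n p^n} = u_n · u_{n+1}⁻¹ in k[t,t⁻¹] for all n ≥ 0 if and only if the p-adic integer ∑_{n≥0} α_n p^n is a rational integer, i.e., if and only if the sequence (α_n) is either eventually 0 or eventually p−1. (This expresses that the stratified line bundle O(α) on 𝔾_m is trivial precisely when α ∈ ℤ.) -/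
/-- The element `t` of `k((t))`. -/
noncomputable def tt (k : Type*) [Field k] : LaurentSeries k := HahnSeries.single 1 1

/-- `f ∈ k((t))` lies in the subring `k[t,t⁻¹]^{pⁿ} ⊆ k[t,t⁻¹]`: it is a Laurent
polynomial (finite support) whose support consists of multiples of `pⁿ`. -/
def InLaurentPolyPow (k : Type*) [Field k] (p n : ℕ) (f : LaurentSeries k) : Prop :=
  f.support.Finite ∧ ∀ i ∈ f.support, ((p : ℤ) ^ n) ∣ i

/-- `f` is a unit of the subring `k[t,t⁻¹]^{pⁿ}`. -/
def IsUnitLaurentPolyPow (k : Type*) [Field k] (p n : ℕ) (f : LaurentSeries k) : Prop :=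
  InLaurentPolyPow k p n f ∧ ∃ g, InLaurentPolyPow k p n g ∧ f * g = 1

/-! A unit of `k[t,t⁻¹]` is a monomial `c tᵃ`, and it is a unit of `k[t,t⁻¹]^{pⁿ}` iff `pⁿ ∣ a`.
Writing `uₙ = cₙ t^{pⁿ mₙ}`, the relation `t^{αₙ pⁿ} = uₙ u_{n+1}⁻¹` says exactly
`mₙ = αₙ + p m_{n+1}`, i.e. that the integer `m₀` has `p`-adic digits `α`. If `m₀ ≥ 0`, then
`0 ≤ pⁿ mₙ ≤ m₀` forces `mₙ`, hence `αₙ`, to vanish eventually; if `m₀ < 0`, the same applies to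
`-1 - mₙ`, whose digits are `p - 1 - αₙ`. -/

namespace HahnSeries

variable {Γ R : Type*} [AddCommMonoid Γ] [LinearOrder Γ] [IsOrderedCancelAddMonoid Γ]

theorem coeff_mul_add_of_forall_le [NonUnitalNonAssocSemiring R] {x y : HahnSeries Γ R}
    {a b : Γ} (ha : ∀ i ∈ x.support, i ≤ a) (hb : ∀ j ∈ y.support, j ≤ b) :
    (x * y).coeff (a + b) = x.coeff a * y.coeff b := by
  rw [coeff_mul]
  refine Finset.sum_eq_single (a, b) (fun ij hij hne => ?_) (fun hab => ?_)
  · obtain ⟨hi, hj, hsum⟩ := Finset.mem_antidiagonal.1 hij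
    exact absurd (Prod.ext_iff.2 ((add_eq_add_iff_eq_and_eq (ha _ hi) (hb _ hj)).1 hsum)) hne
  · by_contra hne
    exact hab (Finset.mem_antidiagonal.2
      ⟨left_ne_zero_of_mul hne, right_ne_zero_of_mul hne, rfl⟩)

theorem exists_eq_single_of_mul_eq_one [Semiring R] [NoZeroDivisors R] [Nontrivial R]
    {x y : HahnSeries Γ R} (hx : x.support.Finite) (hy : y.support.Finite) (hxy : x * y = 1) :
    ∃ a c, c ≠ 0 ∧ x = single a c := by
  have hx0 : x ≠ 0 := left_ne_zero_of_mul_eq_one hxy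
  have hy0 : y ≠ 0 := right_ne_zero_of_mul_eq_one hxy
  obtain ⟨a, ha, ha_max⟩ : ∃ a ∈ x.support, ∀ i ∈ x.support, i ≤ a :=
    Set.exists_max_image _ id hx (support_nonempty_iff.2 hx0)
  obtain ⟨b, hb, hb_max⟩ : ∃ b ∈ y.support, ∀ j ∈ y.support, j ≤ b :=
    Set.exists_max_image _ id hy (support_nonempty_iff.2 hy0)
  -- Top exponents and bottom exponents of `x` and `y` both add up to `0`, so they coincide.
  have hab : a + b = 0 := by
    by_contra hne
    have := coeff_mul_add_of_forall_le ha_max hb_max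
    rw [hxy, coeff_one, if_neg hne] at this
    exact mul_ne_zero ha hb this.symm
  have horder : x.order + y.order = 0 := by
    rw [← order_mul hx0 hy0, hxy, order_one]
  have hxa : x.order = a := ((add_eq_add_iff_eq_and_eq (order_le_of_coeff_ne_zero ha)
    (order_le_of_coeff_ne_zero hb)).1 (horder.trans hab.symm)).1
  refine ⟨a, x.coeff a, ha, coeff_injective <| funext fun i => ?_⟩
  rw [coeff_single]
  split_ifs with hi
  · rw [hi]
  · by_contra hne
    exact hi (le_antisymm (ha_max i hne) (hxa ▸ order_le_of_coeff_ne_zero hne))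

end HahnSeries

/-- `m n` plays the role of `∑_{i ≥ n} α i * p ^ (i - n)`, so such an integer sequence exists
exactly when the `p`-adic integer `∑ α n * p ^ n` lies in `ℤ`. -/
def IsIntegerTail (p : ℕ) (α : ℕ → ℕ) (m : ℕ → ℤ) : Prop :=
  ∀ n, m n = α n + p * m (n + 1)

namespace IsIntegerTail

variable {p : ℕ} {α : ℕ → ℕ} {m : ℕ → ℤ}

theorem pow_mul_le (h : IsIntegerTail p α m) (n : ℕ) : (p : ℤ) ^ n * m n ≤ m 0 := by
  induction n with
  | zero => simp
  | succ n ih =>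
    calc (p : ℤ) ^ (n + 1) * m (n + 1) = p ^ n * (m n - α n) := by rw [h n]; ring
      _ ≤ p ^ n * m n := mul_le_mul_of_nonneg_left (by linarith [(α n).cast_nonneg (α := ℤ)])
          (by positivity)
      _ ≤ m 0 := ih

theorem nonneg (h : IsIntegerTail p α m) (hα : ∀ n, α n < p) (h0 : 0 ≤ m 0) (n : ℕ) :
    0 ≤ m n := by
  induction n with
  | zero => exact h0
  | succ n ih =>
    by_contra! hneg
    have hrec := h n
    have hαn : (α n : ℤ) < p := by exact_mod_cast hα n
    nlinarith

theorem eventually_zero (h : IsIntegerTail p α m) (hp : 2 ≤ p) (hα : ∀ n, α n < p)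
    (h0 : 0 ≤ m 0) : ∃ N, ∀ n, N ≤ n → α n = 0 := by
  have hzero : ∀ n, (m 0).toNat ≤ n → m n = 0 := by
    intro n hn
    have hlt : m 0 < (p : ℤ) ^ n :=
      calc m 0 ≤ n := by omega
        _ < (p : ℤ) ^ n := by exact_mod_cast Nat.lt_pow_self hp
    have := h.pow_mul_le n
    have := h.nonneg hα h0 n
    nlinarith
  refine ⟨(m 0).toNat, fun n hn => ?_⟩
  have hrec := h n
  rw [hzero n hn, hzero (n + 1) (by omega)] at hrec
  omega

theorem complement (h : IsIntegerTail p α m) (hα : ∀ n, α n < p) :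
    IsIntegerTail p (fun n => p - 1 - α n) (fun n => -1 - m n) := by
  intro n
  have hcast : ((p - 1 - α n : ℕ) : ℤ) = p - 1 - α n := by have := hα n; omega
  rw [hcast]
  linear_combination -h n

theorem of_eventually_zero {N : ℕ} (hN : ∀ n, N ≤ n → α n = 0) :
    IsIntegerTail p α (fun n => ∑ i ∈ Finset.range N, (α (n + i) : ℤ) * p ^ i) := by
  intro n
  dsimp only
  have hlast := Finset.sum_range_succ (fun i => (α (n + i) : ℤ) * p ^ i) N
  have hfirst := Finset.sum_range_succ' (fun i => (α (n + i) : ℤ) * p ^ i) N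
  rw [hN (n + N) (by omega), Nat.cast_zero, zero_mul, add_zero] at hlast
  rw [← hlast, hfirst, Finset.mul_sum, add_zero, pow_zero, mul_one, add_comm]
  congr 1
  refine Finset.sum_congr rfl fun i _ => ?_
  rw [show n + (i + 1) = n + 1 + i by omega, pow_succ]
  ring

end IsIntegerTail

theorem exists_isIntegerTail_iff {p : ℕ} {α : ℕ → ℕ} (hp : 2 ≤ p) (hα : ∀ n, α n < p) :
    (∃ m, IsIntegerTail p α m) ↔
      (∃ N, ∀ n, N ≤ n → α n = 0) ∨ (∃ N, ∀ n, N ≤ n → α n = p - 1) := by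
  have hα' : ∀ n, p - 1 - α n < p := fun n => by omega
  constructor
  · rintro ⟨m, hm⟩
    rcases le_or_gt 0 (m 0) with h0 | h0
    · exact Or.inl (hm.eventually_zero hp hα h0)
    · obtain ⟨N, hN⟩ := (hm.complement hα).eventually_zero hp hα' (by omega)
      exact Or.inr ⟨N, fun n hn => by have := hN n hn; have := hα n; omega⟩
  · rintro (⟨N, hN⟩ | ⟨N, hN⟩)
    · exact ⟨_, IsIntegerTail.of_eventually_zero hN⟩
    · have hβ : ∀ n, N ≤ n → p - 1 - α n = 0 := fun n hn => by rw [hN n hn, Nat.sub_self]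
      have hm := (IsIntegerTail.of_eventually_zero (p := p) hβ).complement hα'
      have hαβ : (fun n => p - 1 - (p - 1 - α n)) = α := funext fun n => by have := hα n; omega
      exact ⟨_, hαβ ▸ hm⟩

section LaurentSeries

open HahnSeries

variable {k : Type*} [Field k] {p : ℕ}

theorem order_tt_pow (N : ℕ) : ((tt k) ^ N).order = N := by
  rw [tt, single_pow, one_pow, order_single one_ne_zero, nsmul_one]

theorem inLaurentPolyPow_single (n : ℕ) (m : ℤ) (c : k) :
    InLaurentPolyPow k p n (single ((p : ℤ) ^ n * m) c) :=
  ⟨(Set.finite_singleton _).subset support_single_subset,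
    fun _ hi => ⟨m, support_single_subset hi⟩⟩

theorem isUnitLaurentPolyPow_iff {n : ℕ} {f : LaurentSeries k} :
    IsUnitLaurentPolyPow k p n f ↔ ∃ (m : ℤ) (c : k), c ≠ 0 ∧ f = single ((p : ℤ) ^ n * m) c := by
  constructor
  · rintro ⟨⟨hf, hdvd⟩, g, ⟨hg, -⟩, hfg⟩
    obtain ⟨a, c, hc, rfl⟩ := exists_eq_single_of_mul_eq_one hf hg hfg
    obtain ⟨m, rfl⟩ := hdvd a (by rw [support_single_of_ne hc]; rfl)
    exact ⟨m, c, hc, rfl⟩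
  · rintro ⟨m, c, hc, rfl⟩
    refine ⟨inLaurentPolyPow_single n m c, _, inLaurentPolyPow_single n (-m) c⁻¹, ?_⟩
    rw [single_mul_single, ← mul_add, add_neg_cancel, mul_zero, mul_inv_cancel₀ hc,
      single_zero_one]

theorem exists_units_iff_exists_isIntegerTail (hp : p ≠ 0) (α : ℕ → ℕ) :
    (∃ u : ℕ → LaurentSeries k, (∀ n, IsUnitLaurentPolyPow k p n (u n)) ∧
        ∀ n, (tt k) ^ (α n * p ^ n) = u n * (u (n + 1))⁻¹) ↔
      ∃ m, IsIntegerTail p α m := by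
  constructor
  · rintro ⟨u, hu, hrel⟩
    choose m c hc hum using fun n => isUnitLaurentPolyPow_iff.1 (hu n)
    refine ⟨m, fun n => ?_⟩
    have hrel' := (eq_mul_inv_iff_mul_eq₀ (by simp [hum, hc])).1 (hrel n)
    have horder := congrArg order hrel'
    rw [order_mul (pow_ne_zero _ (by simp [tt])) (by simp [hum, hc]), order_tt_pow, hum, hum,
      order_single (hc _), order_single (hc _)] at horder
    refine mul_left_cancel₀ (pow_ne_zero n (Int.natCast_ne_zero.2 hp)) ?_
    rw [← horder]
    push_cast
    ring
  · rintro ⟨m, hm⟩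
    refine ⟨fun n => single ((p : ℤ) ^ n * m n) 1,
      fun n => isUnitLaurentPolyPow_iff.2 ⟨m n, 1, one_ne_zero, rfl⟩, fun n => ?_⟩
    rw [eq_mul_inv_iff_mul_eq₀ (by simp), tt, single_pow, single_mul_single, one_pow, one_mul]
    dsimp only
    rw [hm n, nsmul_one]
    exact congrArg (single · 1) (by push_cast; ring)

end LaurentSeries

theorem stratified_line_bundle_on_Gm_trivial_iff_general
    (k : Type*) [Field k] (p : ℕ) [CharP k p] (hp : 0 < p)
    (α : ℕ → ℕ) (hα : ∀ n, α n < p) :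
    (∃ u : ℕ → LaurentSeries k,
        (∀ n, IsUnitLaurentPolyPow k p n (u n)) ∧
          ∀ n, (tt k) ^ (α n * p ^ n) = u n * (u (n + 1))⁻¹)
      ↔ ((∃ N, ∀ n, N ≤ n → α n = 0) ∨ (∃ N, ∀ n, N ≤ n → α n = p - 1)) := by
  have hp2 : 2 ≤ p := ((CharP.char_is_prime_or_zero k p).resolve_right hp.ne').two_le
  rw [exists_units_iff_exists_isIntegerTail hp.ne', exists_isIntegerTail_iff hp2 hα]

/-- **Triviality of the stratified line bundle `O(α)` on `𝔾ₘ`.**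
For a digit sequence `α = (α n)` with `0 ≤ α n < p`, there exist units `u n` of
`k[t,t⁻¹]^{pⁿ}` with `t^{αₙ pⁿ} = uₙ · u_{n+1}⁻¹` for all `n` iff the `p`-adic integer
`∑ αₙ pⁿ` is a rational integer, i.e. iff `(α n)` is eventually `0` or eventually
`p - 1`. -/
theorem stratified_line_bundle_on_Gm_trivial_iff
    (k : Type*) [Field k] [IsAlgClosed k] (p : ℕ) [CharP k p] (hp : 0 < p)
    (α : ℕ → ℕ) (hα : ∀ n, α n < p) :
    (∃ u : ℕ → LaurentSeries k,
        (∀ n, IsUnitLaurentPolyPow k p n (u n)) ∧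
          ∀ n, (tt k) ^ (α n * p ^ n) = u n * (u (n + 1))⁻¹)
      ↔ ((∃ N, ∀ n, N ≤ n → α n = 0) ∨ (∃ N, ∀ n, N ≤ n → α n = p - 1)) :=
  stratified_line_bundle_on_Gm_trivial_iff_general k p hp α hα
end

section
/- Let k be an algebraically closed field of characteristic p > 0, let α = (α_n) be a digit sequence, and let (a_n)_{n≥0} be a sequence with a_n ∈ k((t)) and supp(a_n) ⊆ p^nℤ for all n. Then there exist y_n ∈ k((t)) with supp(y_n) ⊆ p^nℤ and y_0 = 0 such that for every n ≥ 0 the element a'_n := a_n − y_n + t^{α_n p^n}·y_{n+1} satisfies supp(a'_n) ⊆ p^nℤ \ (α_n p^n + p^{n+1}ℤ). (Every class in the α-twisted derived limit of the additive groups k((t))^{p^n} has a representative satisfying this support condition; the same proof applies with k[t,t⁻¹] or k((t⁻¹)) in place of k((t)).) -/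
theorem tt_pow (k : Type*) [Field k] (n : ℕ) : tt k ^ n = HahnSeries.single (n : ℤ) 1 := by
  simp [tt]

namespace LaurentSeries

open HahnSeries

variable {R : Type*}

section Semiring

variable [Semiring R]

open Classical in
noncomputable def shiftRestrict (c m : ℤ) (f : LaurentSeries R) : LaurentSeries R where
  coeff i := if m ∣ i then f.coeff (i + c) else 0
  isPWO_support' := by
    refine (f.isPWO_support.image_of_monotone (f := fun j => j - c)
      (fun x y h => by dsimp only; omega)).mono ?_
    intro i hi
    refine ⟨i + c, ?_, by ring⟩
    by_contra h
    simp_all [Function.mem_support]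

theorem coeff_shiftRestrict (c m : ℤ) (f : LaurentSeries R) (i : ℤ) :
    (shiftRestrict c m f).coeff i = if m ∣ i then f.coeff (i + c) else 0 := by
  classical
  rfl

theorem dvd_of_mem_support_shiftRestrict {c m : ℤ} {f : LaurentSeries R} {i : ℤ}
    (hi : i ∈ (shiftRestrict c m f).support) : m ∣ i := by
  by_contra h
  simp [coeff_shiftRestrict, h] at hi

end Semiring

section Ring

variable [Ring R]

noncomputable def twistedCorrection (a : ℕ → LaurentSeries R) (c m : ℕ → ℤ) :
    ℕ → LaurentSeries R
  | 0 => 0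
  | n + 1 => shiftRestrict (c n) (m n) (twistedCorrection a c m n - a n)

theorem coeff_add_single_mul_shiftRestrict_neg (c m : ℤ) (f : LaurentSeries R) (i : ℤ) :
    (f + single c 1 * shiftRestrict c m (-f)).coeff i = if m ∣ i - c then 0 else f.coeff i := by
  rw [coeff_add, coeff_single_mul, one_mul, coeff_shiftRestrict, sub_add_cancel]
  split_ifs <;> simp

theorem support_add_single_mul_shiftRestrict_neg (c m : ℤ) (f : LaurentSeries R) :
    (f + single c 1 * shiftRestrict c m (-f)).support ⊆ {i ∈ f.support | ¬ m ∣ i - c} := by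
  intro i hi
  rw [mem_support, coeff_add_single_mul_shiftRestrict_neg] at hi
  split_ifs at hi with h
  · exact absurd rfl hi
  · exact ⟨hi, h⟩

end Ring

end LaurentSeries

open LaurentSeries in
theorem twisted_rlim_representative_support_condition_general
    (k : Type*) [Field k] (p : ℕ)
    (α : ℕ → ℕ)
    (a : ℕ → LaurentSeries k)
    (ha : ∀ n, ∀ i ∈ (a n).support, ((p : ℤ) ^ n) ∣ i) :
    ∃ y : ℕ → LaurentSeries k,
      (∀ n, ∀ i ∈ (y n).support, ((p : ℤ) ^ n) ∣ i) ∧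
      y 0 = 0 ∧
      ∀ n, ∀ i ∈ (a n - y n + (tt k) ^ (α n * p ^ n) * y (n + 1)).support,
        ((p : ℤ) ^ n) ∣ i ∧ ¬ ((p : ℤ) ^ (n + 1) ∣ i - (α n * p ^ n : ℕ)) := by
  set y := twistedCorrection a (fun n => ((α n * p ^ n : ℕ) : ℤ)) (fun n => (p : ℤ) ^ (n + 1))
  have hy : ∀ n, ∀ i ∈ (y n).support, ((p : ℤ) ^ n) ∣ i
    | 0, i, hi => by simp [y, twistedCorrection] at hi
    | _ + 1, _, hi => dvd_of_mem_support_shiftRestrict hi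
  refine ⟨y, hy, rfl, fun n i hi => ?_⟩
  have hy_succ :
      y (n + 1) = shiftRestrict (α n * p ^ n : ℕ) ((p : ℤ) ^ (n + 1)) (-(a n - y n)) := by
    rw [neg_sub]; rfl
  rw [tt_pow, hy_succ] at hi
  obtain ⟨hf, hnd⟩ := support_add_single_mul_shiftRestrict_neg _ _ _ hi
  refine ⟨?_, hnd⟩
  rcases HahnSeries.support_sub_subset _ _ hf with h | h
  · exact ha n i h
  · exact hy n i h

/-- **Normal form of representatives of the twisted derived limit (Lemma 5.9 a)).**
Let `α = (α n)` be a digit sequence and `(a n)` a sequence in `k((t))` with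
`supp(a n) ⊆ pⁿℤ`.  Then there are `y n ∈ k((t))` with `supp(y n) ⊆ pⁿℤ` and `y 0 = 0`
such that each `a'ₙ := aₙ − yₙ + t^{αₙ pⁿ}·y_{n+1}` has support contained in
`pⁿℤ \ (αₙ pⁿ + p^{n+1}ℤ)`. -/
theorem twisted_rlim_representative_support_condition
    (k : Type*) [Field k] [IsAlgClosed k] (p : ℕ) [CharP k p] (hp : 0 < p)
    (α : ℕ → ℕ) (hα : ∀ n, α n < p)
    (a : ℕ → LaurentSeries k)
    (ha : ∀ n, ∀ i ∈ (a n).support, ((p : ℤ) ^ n) ∣ i) :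
    ∃ y : ℕ → LaurentSeries k,
      (∀ n, ∀ i ∈ (y n).support, ((p : ℤ) ^ n) ∣ i) ∧
      y 0 = 0 ∧
      ∀ n, ∀ i ∈ (a n - y n + (tt k) ^ (α n * p ^ n) * y (n + 1)).support,
        ((p : ℤ) ^ n) ∣ i ∧ ¬ ((p : ℤ) ^ (n + 1) ∣ i - (α n * p ^ n : ℕ)) :=
  twisted_rlim_representative_support_condition_general k p α a ha
end

section
/- Let k be an algebraically closed field of characteristic p > 0 and let α = (α_n) be an admissible digit sequence. Model the field k((t⁻¹)) as the Laurent series field k((s)) via t = s⁻¹, so that the support of an element as a series in t is the negative of its support as a series in s. Let (a_n)_{n≥0} be a sequence with a_n ∈ k((s)) and supp_s(a_n) ⊆ p^nℤ \ (−α_n p^n + p^{n+1}ℤ) for all n. Then the following are equivalent: (i) there exist y_n ∈ k((s)) with supp_s(y_n) ⊆ p^nℤ such that s^{α_n p^n}·a_n = s^{α_n p^n}·y_n − y_{n+1} for all n ≥ 0 (the equation a_n = y_n − t^{α_n p^n} y_{n+1} rewritten in the variable s); (ii) there exists N such that for all n ≥ N one has supp_s(a_n) ⊆ ℤ_{>0},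 i.e., a_n ∈ s·k⟦s⟧ (equivalently a_n ∈ t⁻¹·k⟦t⁻¹⟧). -/
/-- The element `s` of `k((s))` (modelling `t⁻¹ ∈ k((t⁻¹))`). -/
noncomputable def ss (k : Type*) [Field k] : LaurentSeries k := HahnSeries.single 1 1

/-- A digit sequence `α` (with `0 ≤ α n < p`) is admissible if either all digits vanish,
or the `p`-adic integer `∑ αₙ pⁿ` is not a rational integer (i.e. `(α n)` is neither
eventually `0` nor eventually `p − 1`). -/
def AdmissibleDigits (p : ℕ) (α : ℕ → ℕ) : Prop :=
  (∀ n, α n = 0) ∨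
    ¬ ((∃ N, ∀ n, N ≤ n → α n = 0) ∨ (∃ N, ∀ n, N ≤ n → α n = p - 1))

/-!
Put `γₙ = ∑_{m<n} αₘ pᵐ`, `bₙ = s^{-γₙ} aₙ` and `yₙ = s^{γₙ} wₙ`. The equation becomes
`bₙ = wₙ - wₙ₊₁`, and with `Lₙ = {j : pⁿ ∣ j + γₙ}`, a decreasing chain, the hypothesis on `aₙ`
says `supp bₙ ⊆ Lₙ \ Lₙ₊₁` while the condition on `yₙ` says `supp wₙ ⊆ Lₙ`. Such a telescoping
solution exists iff `∑ bₙ` converges, i.e. iff the supports of the `bₙ` are uniformly bounded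
below: then `wₙ = ∑_{m ≥ n} bₘ`, and conversely `w₀ = ∑_{m ≤ n} bₘ + wₙ₊₁` has each `supp bₙ`
in its support. Since `0 ≤ γₙ < pⁿ`, a uniform lower bound holds iff `aₙ ∈ s k⟦s⟧` for large `n`:
otherwise either all digits vanish and the offending `aₙ` have support `≤ -pⁿ`, or `γₙ → ∞`.
-/

open HahnSeries Finset

lemma Set.isPWO_iff_bddBelow {α : Type*} [LinearOrder α] [LocallyFiniteOrder α] [Nonempty α]
    {s : Set α} : s.IsPWO ↔ BddBelow s := by
  refine ⟨fun hs => ?_, fun hs => hs.isWF.isPWO⟩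
  rcases s.eq_empty_or_nonempty with rfl | hne
  · exact bddBelow_empty
  · exact ⟨hs.isWF.min hne, fun _ ha => hs.isWF.min_le hne ha⟩

lemma Antitone.eq_of_mem_diff_succ {α : Type*} {L : ℕ → Set α} (hL : Antitone L) {g : α}
    {m n : ℕ} (hm : g ∈ L m \ L (m + 1)) (hn : g ∈ L n \ L (n + 1)) : m = n := by
  by_contra hne
  rcases lt_or_gt_of_ne hne with h | h
  · exact hm.2 (hL h hn.1)
  · exact hn.2 (hL h hm.1)

section Telescoping

variable {Γ R : Type*} [PartialOrder Γ] [AddCommGroup R] {L : ℕ → Set Γ}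

def HahnSeries.SummableFamily.ofSupportSubsetDiff (hL : Antitone L) (b : ℕ → HahnSeries Γ R)
    (hb : ∀ n, (b n).support ⊆ L n \ L (n + 1)) (hpwo : (⋃ n, (b n).support).IsPWO) :
    SummableFamily Γ R ℕ where
  toFun := b
  isPWO_iUnion_support' := hpwo
  finite_co_support' _ := Set.Subsingleton.finite fun _ hm _ hn =>
    hL.eq_of_mem_diff_succ (hb _ hm) (hb _ hn)

theorem exists_sub_succ_eq_iff_isPWO_iUnion_support (hL : Antitone L)
    {b : ℕ → HahnSeries Γ R} (hb : ∀ n, (b n).support ⊆ L n \ L (n + 1)) :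
    (∃ w : ℕ → HahnSeries Γ R, (∀ n, (w n).support ⊆ L n) ∧ ∀ n, b n = w n - w (n + 1)) ↔
      (⋃ n, (b n).support).IsPWO := by
  constructor
  · rintro ⟨w, hw, hbw⟩
    refine (w 0).isPWO_support.mono (Set.iUnion_subset fun m g hg => ?_)
    have hw_succ : (w (m + 1)).coeff g = 0 := by
      by_contra h
      exact (hb m hg).2 (hw _ h)
    have htel : w 0 - w (m + 1) = ∑ l ∈ range (m + 1), b l := by
      simp only [hbw, sum_range_sub']
    have hcoeff : (w 0).coeff g = (b m).coeff g := by
      calc (w 0).coeff g = (w 0 - w (m + 1)).coeff g := by rw [coeff_sub, hw_succ, sub_zero]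
        _ = ∑ l ∈ range (m + 1), (b l).coeff g := by rw [htel, coeff_sum]
        _ = (b m).coeff g := sum_eq_single_of_mem m (self_mem_range_succ m) fun l _ hlm => by
            by_contra h
            exact hlm (hL.eq_of_mem_diff_succ (hb l h) (hb m hg))
    exact (mem_support _ _).2 (hcoeff ▸ hg)
  · intro hpwo
    set F := SummableFamily.ofSupportSubsetDiff hL b hb hpwo
    refine ⟨fun n => F.hsum - ∑ m ∈ range n, b m, fun n g hg => ?_, fun n => ?_⟩
    · by_contra hgL
      refine hg ?_
      rw [coeff_sub, SummableFamily.coeff_hsum_eq_sum_of_subset (t := range n), coeff_sum]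
      · exact sub_self _
      intro m hm
      by_contra hmn
      exact hgL (hL (not_lt.1 (mem_range.not.1 hmn)) (hb m hm).1)
    · simp only [sum_range_succ]
      abel

end Telescoping

section Digits

variable (p : ℕ) (α : ℕ → ℕ)

def digitSum (n : ℕ) : ℕ := ∑ m ∈ range n, α m * p ^ m

lemma digitSum_succ (n : ℕ) : digitSum p α (n + 1) = digitSum p α n + α n * p ^ n :=
  sum_range_succ _ _

def negDigitSumClass (n : ℕ) : Set ℤ := {j | (p : ℤ) ^ n ∣ j + digitSum p α n}

variable {p α}

lemma pow_dvd_digitSum_sub {l m : ℕ} (h : l ≤ m) :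
    (p : ℤ) ^ l ∣ (digitSum p α m : ℤ) - digitSum p α l := by
  push_cast [digitSum]
  rw [← sum_Ico_eq_sub _ h]
  exact dvd_sum fun i hi => dvd_mul_of_dvd_right (pow_dvd_pow _ (mem_Ico.1 hi).1) _

lemma digitSum_lt_pow (hα : ∀ n, α n < p) (n : ℕ) : digitSum p α n < p ^ n := by
  induction n with
  | zero => simp [digitSum]
  | succ n ih =>
    calc digitSum p α (n + 1) < p ^ n + α n * p ^ n := by rw [digitSum_succ]; omega
      _ = (α n + 1) * p ^ n := by ring
      _ ≤ p * p ^ n := Nat.mul_le_mul_right _ (hα n)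
      _ = p ^ (n + 1) := (pow_succ' p n).symm

lemma pow_le_digitSum {m n : ℕ} (hm : α m ≠ 0) (hmn : m < n) : p ^ m ≤ digitSum p α n :=
  calc p ^ m ≤ α m * p ^ m := Nat.le_mul_of_pos_left _ (Nat.pos_of_ne_zero hm)
    _ ≤ digitSum p α n :=
      single_le_sum (f := fun i => α i * p ^ i) (fun _ _ => Nat.zero_le _) (mem_range.2 hmn)

variable (p α)

lemma antitone_negDigitSumClass : Antitone (negDigitSumClass p α) := by
  intro l m h j (hj : (p : ℤ) ^ m ∣ j + digitSum p α m)
  show (p : ℤ) ^ l ∣ j + digitSum p α l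
  rw [show j + (digitSum p α l : ℤ) = j + digitSum p α m - (digitSum p α m - digitSum p α l) by
    ring]
  exact dvd_sub (dvd_trans (pow_dvd_pow _ h) hj) (pow_dvd_digitSum_sub h)

variable {p α}

lemma add_neg_digitSum_mem_diff {n : ℕ} {i : ℤ} (h₁ : (p : ℤ) ^ n ∣ i)
    (h₂ : ¬ (p : ℤ) ^ (n + 1) ∣ i + (α n * p ^ n : ℕ)) :
    i + -(digitSum p α n : ℤ) ∈ negDigitSumClass p α n \ negDigitSumClass p α (n + 1) := by
  refine ⟨by simpa [negDigitSumClass] using h₁, fun h => h₂ ?_⟩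
  have h' : (p : ℤ) ^ (n + 1) ∣ i + -(digitSum p α n : ℤ) + digitSum p α (n + 1) := h
  rw [digitSum_succ, Nat.cast_add] at h'
  convert h' using 1
  ring

lemma bddBelow_iUnion_image_of_eventually_pos (hα : ∀ n, α n < p) {A : ℕ → Set ℤ}
    (hA_bdd : ∀ n, BddBelow (A n)) (hA : ∀ n, ∀ i ∈ A n, (p : ℤ) ^ n ∣ i)
    (hpos : ∃ N, ∀ n, N ≤ n → ∀ i ∈ A n, 0 < i) :
    BddBelow (⋃ n, (· + -(digitSum p α n : ℤ)) '' A n) := by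
  obtain ⟨N, hN⟩ := hpos
  have hsub : (⋃ n, (· + -(digitSum p α n : ℤ)) '' A n) ⊆
      (⋃ n ∈ Set.Iio N, (· + -(digitSum p α n : ℤ)) '' A n) ∪ Set.Ici 0 := by
    rintro _ ⟨_, ⟨n, rfl⟩, i, hi, rfl⟩
    rcases lt_or_ge n N with hn | hn
    · exact Or.inl (Set.mem_biUnion hn ⟨i, hi, rfl⟩)
    · have hi_ge : (p : ℤ) ^ n ≤ i := Int.le_of_dvd (hN n hn i hi) (hA n i hi)
      have hγ : (digitSum p α n : ℤ) < (p : ℤ) ^ n := by exact_mod_cast digitSum_lt_pow hα n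
      exact Or.inr (show (0 : ℤ) ≤ i + -(digitSum p α n : ℤ) by linarith)
  refine BddBelow.mono hsub (BddBelow.union ?_ bddBelow_Ici)
  exact (Set.finite_Iio N).bddBelow_biUnion.2 fun n _ =>
    (monotone_id.add_const _).map_bddBelow (hA_bdd n)

lemma eventually_pos_of_bddBelow_iUnion_image (hp : 2 ≤ p) (hadm : AdmissibleDigits p α)
    {A : ℕ → Set ℤ}
    (hA : ∀ n, ∀ i ∈ A n, (p : ℤ) ^ n ∣ i ∧ ¬ (p : ℤ) ^ (n + 1) ∣ i + (α n * p ^ n : ℕ))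
    (hbdd : BddBelow (⋃ n, (· + -(digitSum p α n : ℤ)) '' A n)) :
    ∃ N, ∀ n, N ≤ n → ∀ i ∈ A n, 0 < i := by
  obtain ⟨B, hB⟩ := hbdd
  have hlow : ∀ n, ∀ i ∈ A n, B ≤ i - digitSum p α n := fun n i hi =>
    sub_eq_add_neg i _ ▸ hB (Set.mem_iUnion.2 ⟨n, i, hi, rfl⟩)
  have hpow : ∀ n : ℕ, (n : ℤ) < (p : ℤ) ^ n := fun n => by exact_mod_cast Nat.lt_pow_self hp
  set M := (-B).toNat
  have hM : -B ≤ M := Int.self_le_toNat _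
  rcases hadm with hzero | hadm
  · refine ⟨M, fun n hn i hi => ?_⟩
    by_contra! hi₀
    have hγ : digitSum p α n = 0 := by simp [digitSum, hzero]
    have hi_ne : i ≠ 0 := by
      rintro rfl
      exact (hA n 0 hi).2 (by simp [hzero])
    have hi_le : (p : ℤ) ^ n ≤ -i := Int.le_of_dvd (by omega) (dvd_neg.2 (hA n i hi).1)
    have := hlow n i hi
    have : (M : ℤ) ≤ n := by exact_mod_cast hn
    rw [hγ] at *
    linarith [hpow n]
  · obtain ⟨m, hm, hαm⟩ : ∃ m, M ≤ m ∧ α m ≠ 0 := by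
      by_contra! h
      exact (not_or.1 hadm).1 ⟨M, h⟩
    refine ⟨m + 1, fun n hn i hi => ?_⟩
    by_contra! hi₀
    have hγ : (p : ℤ) ^ m ≤ digitSum p α n := by exact_mod_cast pow_le_digitSum hαm hn
    have : (M : ℤ) ≤ m := by exact_mod_cast hm
    linarith [hlow n i hi, hpow m]

end Digits

lemma zpow_mul_eq_zpow_mul_sub_iff {K : Type*} [Field K] {S : K} (hS : S ≠ 0) (c g : ℤ)
    (a w w' : K) :
    S ^ c * a = S ^ c * (S ^ g * w) - S ^ (c + g) * w' ↔ S ^ (-g) * a = w - w' := by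
  have hlhs : S ^ c * a = S ^ (c + g) * (S ^ (-g) * a) := by
    rw [← mul_assoc, ← zpow_add₀ hS, add_neg_cancel_right]
  have hrhs : S ^ c * (S ^ g * w) - S ^ (c + g) * w' = S ^ (c + g) * (w - w') := by
    rw [zpow_add₀ hS]; ring
  rw [hlhs, hrhs, mul_right_inj' (zpow_ne_zero _ hS)]

section LaurentShift

variable {k : Type*} [Field k]

lemma ss_ne_zero : ss k ≠ 0 := single_ne_zero one_ne_zero

lemma coeff_ss_zpow_mul (m j : ℤ) (x : LaurentSeries k) :
    (ss k ^ m * x).coeff j = x.coeff (j - m) := by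
  rw [ss, ← RatFunc.single_zpow, coeff_single_mul, one_mul]

lemma support_ss_zpow_mul (m : ℤ) (x : LaurentSeries k) :
    (ss k ^ m * x).support = (· + m) '' x.support := by
  ext j
  simp only [mem_support, coeff_ss_zpow_mul, Set.mem_image]
  exact ⟨fun h => ⟨j - m, h, sub_add_cancel j m⟩, by rintro ⟨i, hi, rfl⟩; rwa [add_sub_cancel_right]⟩

theorem exists_twisted_solution_iff_exists_telescoping (p : ℕ) (α : ℕ → ℕ)
    (a : ℕ → LaurentSeries k) :
    (∃ y : ℕ → LaurentSeries k, (∀ n, ∀ i ∈ (y n).support, (p : ℤ) ^ n ∣ i) ∧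
        ∀ n, ss k ^ (α n * p ^ n) * a n = ss k ^ (α n * p ^ n) * y n - y (n + 1)) ↔
      ∃ w : ℕ → LaurentSeries k, (∀ n, (w n).support ⊆ negDigitSumClass p α n) ∧
        ∀ n, ss k ^ (-(digitSum p α n : ℤ)) * a n = w n - w (n + 1) := by
  let e : (ℕ → LaurentSeries k) ≃ (ℕ → LaurentSeries k) := Equiv.piCongrRight fun n =>
    Equiv.mulLeft₀ (ss k ^ (digitSum p α n : ℤ)) (zpow_ne_zero _ ss_ne_zero)
  have he : ∀ w n, e w n = ss k ^ (digitSum p α n : ℤ) * w n := fun _ _ => rfl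
  refine e.exists_congr_right.symm.trans (exists_congr fun w => and_congr
    (forall_congr' fun n => ?_) (forall_congr' fun n => ?_))
  · rw [he, support_ss_zpow_mul, Set.forall_mem_image]
    rfl
  · have hγ : (digitSum p α (n + 1) : ℤ) = ((α n * p ^ n : ℕ) : ℤ) + digitSum p α n := by
      rw [digitSum_succ]; push_cast; ring
    rw [he, he, hγ, ← zpow_natCast (ss k) (α n * p ^ n)]
    exact zpow_mul_eq_zpow_mul_sub_iff ss_ne_zero _ _ _ _ _

end LaurentShift

theorem twisted_rlim_trivial_iff_laurent_series_at_infinity_general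
    (k : Type*) [Field k] (p : ℕ) [CharP k p] (hp : 0 < p)
    (α : ℕ → ℕ) (hα : ∀ n, α n < p) (hadm : AdmissibleDigits p α)
    (a : ℕ → LaurentSeries k)
    (ha : ∀ n, ∀ i ∈ (a n).support,
      ((p : ℤ) ^ n) ∣ i ∧ ¬ ((p : ℤ) ^ (n + 1) ∣ i + (α n * p ^ n : ℕ))) :
    (∃ y : ℕ → LaurentSeries k,
        (∀ n, ∀ i ∈ (y n).support, ((p : ℤ) ^ n) ∣ i) ∧
        ∀ n, (ss k) ^ (α n * p ^ n) * a n =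
          (ss k) ^ (α n * p ^ n) * y n - y (n + 1))
      ↔ (∃ N, ∀ n, N ≤ n → ∀ i ∈ (a n).support, 0 < i) := by
  have hp₂ : 2 ≤ p := (CharP.char_prime_of_ne_zero k hp.ne').two_le
  have hb : ∀ n, (ss k ^ (-(digitSum p α n : ℤ)) * a n).support ⊆
      negDigitSumClass p α n \ negDigitSumClass p α (n + 1) := fun n => by
    rw [support_ss_zpow_mul]
    rintro _ ⟨i, hi, rfl⟩
    exact add_neg_digitSum_mem_diff (ha n i hi).1 (ha n i hi).2
  rw [exists_twisted_solution_iff_exists_telescoping,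
    exists_sub_succ_eq_iff_isPWO_iUnion_support (antitone_negDigitSumClass p α) hb,
    Set.isPWO_iff_bddBelow]
  simp only [support_ss_zpow_mul]
  exact ⟨eventually_pos_of_bddBelow_iUnion_image hp₂ hadm ha,
    bddBelow_iUnion_image_of_eventually_pos hα
      (fun n => Set.isPWO_iff_bddBelow.1 (a n).isPWO_support) fun n i hi => (ha n i hi).1⟩

/-- **Triviality criterion over `k((t⁻¹))` (Lemma 5.9 c)).**
Model `k((t⁻¹))` as `k((s))` with `t = s⁻¹`.  Let `α` be an admissible digit sequence and
`(a n)` a sequence in `k((s))` with `supp_s(aₙ) ⊆ pⁿℤ \ (−αₙ pⁿ + p^{n+1}ℤ)`.  Then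
there exist `yₙ ∈ k((s))` with `supp_s(yₙ) ⊆ pⁿℤ` satisfying
`s^{αₙ pⁿ}·aₙ = s^{αₙ pⁿ}·yₙ − y_{n+1}` for all `n` (the equation
`aₙ = yₙ − t^{αₙ pⁿ} y_{n+1}` rewritten in `s`), iff `aₙ ∈ s·k⟦s⟧` for all large `n`. -/
theorem twisted_rlim_trivial_iff_laurent_series_at_infinity
    (k : Type*) [Field k] [IsAlgClosed k] (p : ℕ) [CharP k p] (hp : 0 < p)
    (α : ℕ → ℕ) (hα : ∀ n, α n < p) (hadm : AdmissibleDigits p α)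
    (a : ℕ → LaurentSeries k)
    (ha : ∀ n, ∀ i ∈ (a n).support,
      ((p : ℤ) ^ n) ∣ i ∧ ¬ ((p : ℤ) ^ (n + 1) ∣ i + (α n * p ^ n : ℕ))) :
    (∃ y : ℕ → LaurentSeries k,
        (∀ n, ∀ i ∈ (y n).support, ((p : ℤ) ^ n) ∣ i) ∧
        ∀ n, (ss k) ^ (α n * p ^ n) * a n =
          (ss k) ^ (α n * p ^ n) * y n - y (n + 1))
      ↔ (∃ N, ∀ n, N ≤ n → ∀ i ∈ (a n).support, 0 < i) :=
  twisted_rlim_trivial_iff_laurent_series_at_infinity_general k p hp α hα hadm a ha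
end

section
/- Let k be an algebraically closed field of characteristic p > 0 and let r ≥ 1. For every pair of sequences (M_n)_{n≥0} with M_n ∈ U_r(k((t))^{p^n}) and (N_n)_{n≥0} with N_n ∈ U_r(k((s))^{p^n}), there exist sequences (A_n) with A_n ∈ U_r(k[t,t⁻¹]^{p^n}), (g_n) with g_n ∈ U_r(k((t))^{p^n}), and (h_n) with h_n ∈ U_r(k((s))^{p^n}) such that for all n ≥ 0: M_n = g_n · A_n · g_{n+1}⁻¹ in GL_r(k((t))) and N_n = h_n · ι(A_n) · h_{n+1}⁻¹ in GL_r(k((s))). (The joint restriction map from R¹lim_n U_r(k[t,t⁻¹]^{p^n}) to R¹lim_n U_r(k((t))^{p^n}) × R¹lim_n U_r(k((t⁻¹))^{p^n}) is surjective.) -/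
/-- `M ∈ U_r(k((t))^{pⁿ})`: an upper-triangular matrix with all diagonal entries `1`
whose entries lie in the subring `k((t))^{pⁿ}` (support consisting of multiples of
`pⁿ`).  The same condition, read in the variable `s`, defines `U_r(k((s))^{pⁿ})`. -/
def MemUrLaurentSeriesPow (k : Type*) [Field k] (p n r : ℕ)
    (M : Matrix (Fin r) (Fin r) (LaurentSeries k)) : Prop :=
  (∀ i j : Fin r, (j : ℕ) < (i : ℕ) → M i j = 0) ∧
  (∀ i : Fin r, M i i = 1) ∧
  (∀ i j : Fin r, ∀ m ∈ (M i j).support, ((p : ℤ) ^ n) ∣ m)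

/-- `M ∈ U_r(k[t,t⁻¹]^{pⁿ})`: additionally, all entries are Laurent polynomials
(finite support). -/
def MemUrLaurentPolyPow (k : Type*) [Field k] (p n r : ℕ)
    (M : Matrix (Fin r) (Fin r) (LaurentSeries k)) : Prop :=
  (∀ i j : Fin r, (j : ℕ) < (i : ℕ) → M i j = 0) ∧
  (∀ i : Fin r, M i i = 1) ∧
  (∀ i j : Fin r, (M i j).support.Finite ∧ ∀ m ∈ (M i j).support, ((p : ℤ) ^ n) ∣ m)

/-- `A'` is obtained from `A` by applying, entrywise, the embedding
`ι : k[t,t⁻¹] → k((s))`, `t ↦ s⁻¹` (coefficientwise reversal). -/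
def IsRevMatSeq (k : Type*) [Field k] (r : ℕ)
    (A A' : ℕ → Matrix (Fin r) (Fin r) (LaurentSeries k)) : Prop :=
  ∀ n (i j : Fin r) (m : ℤ), (A' n i j).coeff m = (A n i j).coeff (-m)

/-!
Additive case first. A nonzero exponent `j` with `p`-adic valuation `ν` can occur in `fₘ` only
for `m ≤ ν`, so its coefficient in `f₀ + ⋯ + f_ν` is final; the Laurent polynomial `a_ν` absorbs
it when `j < 0`, and absorbs the `(-j)`-th coefficient of `e₀ + ⋯ + e_ν` when `j > 0` (the `s`-side,
read through `t ↦ s⁻¹`). What remains on the `t`-side has only positive exponents and is put into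
the power series `g₀`; then `gₙ = g₀ + ∑_{m<n} (aₘ - fₘ)` satisfies `fₙ = gₙ + aₙ - gₙ₊₁` and
has no exponent of valuation `< n`. The `s`-side is the same construction with `f` and `e`
swapped.

For unitriangular matrices, the entry `(i, i + d)` of `Mₙ gₙ₊₁ - gₙ Aₙ` changes under a change of
`g` and `A` on the `d`-th superdiagonal exactly like the additive equation, and entries closer to
the diagonal do not change at all; so the additive case is applied one superdiagonal at a time.
-/

open Finset

namespace HahnSeries

variable {Γ R : Type*} [AddCommMonoid Γ] [PartialOrder Γ] [IsOrderedCancelAddMonoid Γ] [Ring R]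

def supportedSubring (S : AddSubmonoid Γ) : Subring (HahnSeries Γ R) where
  carrier := {x | x.support ⊆ S}
  mul_mem' {x y} hx hy := support_mul_subset.trans (Set.add_subset_iff.2 fun _ ha _ hb =>
    S.add_mem (hx ha) (hy hb))
  one_mem' := support_single_subset.trans (Set.singleton_subset_iff.2 S.zero_mem)
  add_mem' hx hy := (support_add_subset _ _).trans (Set.union_subset hx hy)
  zero_mem' := by simp
  neg_mem' hx := support_neg.trans_subset hx

theorem mem_supportedSubring {S : AddSubmonoid Γ} {x : HahnSeries Γ R} :
    x ∈ supportedSubring S ↔ x.support ⊆ S := Iff.rfl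

def finiteSupportSubring : Subring (HahnSeries Γ R) where
  carrier := {x | x.support.Finite}
  mul_mem' {x y} hx hy := (Set.Finite.add hx hy).subset (support_mul_subset (x := x) (y := y))
  one_mem' := (Set.finite_singleton 0).subset support_single_subset
  add_mem' hx hy := (hx.union hy).subset (support_add_subset _ _)
  zero_mem' := by simp
  neg_mem' {x} hx := show (-x).support.Finite by rwa [support_neg]

theorem mem_finiteSupportSubring {x : HahnSeries Γ R} :
    x ∈ finiteSupportSubring ↔ x.support.Finite := Iff.rfl

end HahnSeries

namespace LaurentSeries

variable {R : Type*} [Ring R]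

-- `R((t ^ q))`; for a perfect field `k` of characteristic `p`, `k((t))^{pⁿ} = k((t ^ pⁿ))`.
variable (R) in
abbrev zmultiplesSubring (q : ℤ) : Subring (LaurentSeries R) :=
  HahnSeries.supportedSubring (AddSubgroup.zmultiples q).toAddSubmonoid

theorem mem_zmultiplesSubring {q : ℤ} {x : LaurentSeries R} :
    x ∈ zmultiplesSubring R q ↔ ∀ m ∈ x.support, q ∣ m := by
  simp [HahnSeries.mem_supportedSubring, Set.subset_def, Int.mem_zmultiples_iff]

theorem zmultiplesSubring_anti {q q' : ℤ} (h : q ∣ q') :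
    zmultiplesSubring R q' ≤ zmultiplesSubring R q := fun _ hx =>
  mem_zmultiplesSubring.2 fun m hm => h.trans (mem_zmultiplesSubring.1 hx m hm)

theorem finite_support_inter_Iio (x : LaurentSeries R) (c : ℤ) :
    (x.support ∩ Set.Iio c).Finite :=
  (Set.finite_Ico x.order c).subset fun _ ⟨hx, hjc⟩ =>
    ⟨not_lt.1 fun h => hx (HahnSeries.coeff_eq_zero_of_lt_order h), hjc⟩

variable (p : ℕ) (f e : ℕ → LaurentSeries R)

-- The coefficient of `t ^ j` in the principal part of `x` plus that of `y` read in `s = t⁻¹`.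

def principalPartsCoeff (x y : LaurentSeries R) (j : ℤ) : R :=
  if j < 0 then x.coeff j else if 0 < j then y.coeff (-j) else 0

theorem principalPartsCoeff_neg (x y : LaurentSeries R) (j : ℤ) :
    principalPartsCoeff y x (-j) = principalPartsCoeff x y j := by
  unfold principalPartsCoeff
  split_ifs <;> first | omega | simp

theorem finite_support_principalPartsCoeff (x y : LaurentSeries R) :
    (Function.support (principalPartsCoeff x y)).Finite := by
  refine ((finite_support_inter_Iio x 0).union
    ((finite_support_inter_Iio y 0).preimage neg_injective.injOn)).subset fun j hj => ?_
  rw [Function.mem_support, principalPartsCoeff] at hj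
  split_ifs at hj with hneg hpos
  · exact Or.inl ⟨hj, hneg⟩
  · exact Or.inr ⟨hj, neg_neg_iff_pos.2 hpos⟩
  · exact absurd rfl hj

theorem finite_support_levelCorrectionCoeff (n : ℕ) :
    (Function.support fun j => if padicValInt p j = n then
      principalPartsCoeff (∑ m ∈ range (n + 1), f m) (∑ m ∈ range (n + 1), e m) j else 0).Finite :=
  (finite_support_principalPartsCoeff _ _).subset fun _ hj => by
    simp only [Function.mem_support, ne_eq, ite_eq_right_iff, Classical.not_imp] at hj
    exact hj.2

def levelCorrection (n : ℕ) : LaurentSeries R :=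
  HahnSeries.ofSuppBddBelow _ (finite_support_levelCorrectionCoeff p f e n).bddBelow

def gaugeHead : LaurentSeries R :=
  HahnSeries.ofSuppBddBelow
    (fun j => if 0 < j then
      (∑ m ∈ range (padicValInt p j + 1), f m - levelCorrection p f e (padicValInt p j)).coeff j
      else 0)
    ⟨0, fun _ hj => not_lt.1 fun h => hj (if_neg h.not_gt)⟩

def gauge (n : ℕ) : LaurentSeries R :=
  gaugeHead p f e + ∑ m ∈ range n, (levelCorrection p f e m - f m)

theorem coeff_levelCorrection (n : ℕ) (j : ℤ) :
    (levelCorrection p f e n).coeff j = if padicValInt p j = n then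
      principalPartsCoeff (∑ m ∈ range (n + 1), f m) (∑ m ∈ range (n + 1), e m) j else 0 := rfl

theorem coeff_gaugeHead (j : ℤ) : (gaugeHead p f e).coeff j = if 0 < j then
    (∑ m ∈ range (padicValInt p j + 1), f m - levelCorrection p f e (padicValInt p j)).coeff j
    else 0 := rfl

theorem support_levelCorrection_finite (n : ℕ) : (levelCorrection p f e n).support.Finite :=
  finite_support_levelCorrectionCoeff p f e n

theorem levelCorrection_mem_zmultiplesSubring (n : ℕ) :
    levelCorrection p f e n ∈ zmultiplesSubring R ((p : ℤ) ^ n) := by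
  refine mem_zmultiplesSubring.2 fun j hj => ?_
  rw [HahnSeries.mem_support, coeff_levelCorrection, ne_eq, ite_eq_right_iff,
    Classical.not_imp] at hj
  exact hj.1 ▸ padicValInt_dvd j

theorem coeff_levelCorrection_swap (n : ℕ) (j : ℤ) :
    (levelCorrection p e f n).coeff j = (levelCorrection p f e n).coeff (-j) := by
  simp only [coeff_levelCorrection, ← principalPartsCoeff_neg _ _ j, padicValInt,
    Int.natAbs_neg]

theorem eq_gauge_add_levelCorrection_sub_gauge (n : ℕ) :
    f n = gauge p f e n + levelCorrection p f e n - gauge p f e (n + 1) := by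
  rw [gauge, gauge, sum_range_succ]
  abel

variable {p f e}

theorem coeff_sum_range_eq_of_padicValInt_lt
    (hf : ∀ n, f n ∈ zmultiplesSubring R ((p : ℤ) ^ n)) {j : ℤ} {n : ℕ} (hp : p ≠ 1) (hj : j ≠ 0)
    (hjn : padicValInt p j < n) :
    (∑ m ∈ range n, f m).coeff j = (∑ m ∈ range (padicValInt p j + 1), f m).coeff j := by
  rw [← sum_range_add_sum_Ico _ hjn, HahnSeries.coeff_add, add_eq_left, HahnSeries.coeff_sum]
  refine sum_eq_zero fun m hm => by_contra fun hjm => ?_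
  have := (padicValInt_dvd_iff_of_ne_one hp m j).1 (mem_zmultiplesSubring.1 (hf m) j hjm)
  simp only [mem_Ico] at hm
  omega

theorem gauge_mem_zmultiplesSubring (hf : ∀ n, f n ∈ zmultiplesSubring R ((p : ℤ) ^ n)) (n : ℕ) :
    gauge p f e n ∈ zmultiplesSubring R ((p : ℤ) ^ n) := by
  refine mem_zmultiplesSubring.2 fun j hj => ?_
  by_contra hdvd
  obtain ⟨hp, hj0, hjn⟩ : p ≠ 1 ∧ j ≠ 0 ∧ padicValInt p j < n := by
    rcases eq_or_ne p 1 with rfl | hp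
    · simp at hdvd
    · simpa [padicValInt_dvd_iff_of_ne_one hp, not_le] using And.intro hp hdvd
  have hcorr : ∑ m ∈ range n, (levelCorrection p f e m).coeff j =
      (levelCorrection p f e (padicValInt p j)).coeff j :=
    sum_eq_single_of_mem _ (mem_range.2 hjn) fun m _ hm => by
      rw [coeff_levelCorrection, if_neg (Ne.symm hm)]
  have hsum : (∑ m ∈ range n, (levelCorrection p f e m - f m)).coeff j =
      (levelCorrection p f e (padicValInt p j)).coeff j -
        (∑ m ∈ range (padicValInt p j + 1), f m).coeff j := by
    rw [sum_sub_distrib, HahnSeries.coeff_sub, HahnSeries.coeff_sum, hcorr,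
      coeff_sum_range_eq_of_padicValInt_lt hf hp hj0 hjn]
  apply hj
  rw [gauge, HahnSeries.coeff_add, hsum, coeff_gaugeHead]
  rcases hj0.lt_or_gt with hneg | hpos
  · rw [if_neg hneg.not_gt, coeff_levelCorrection, if_pos rfl, principalPartsCoeff, if_pos hneg]
    abel
  · rw [if_pos hpos, HahnSeries.coeff_sub]
    abel

end LaurentSeries

namespace Matrix

variable {R : Type*}

def IsUpperUnitriangular {m : Type*} [LT m] [Zero R] [One R] (M : Matrix m m R) : Prop :=
  M.IsUpperTriangular ∧ ∀ i, M i i = 1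

theorem isUpperUnitriangular_one {m : Type*} [Preorder m] [DecidableEq m] [Zero R] [One R] :
    (1 : Matrix m m R).IsUpperUnitriangular :=
  ⟨fun _ _ h => one_apply_ne h.ne', fun _ => one_apply_eq _⟩

theorem IsUpperUnitriangular.det_eq_one {m : Type*} [LinearOrder m] [Fintype m] [DecidableEq m]
    [CommRing R] {M : Matrix m m R} (hM : M.IsUpperUnitriangular) : M.det = 1 := by
  rw [det_of_isUpperTriangular hM.1]
  exact prod_eq_one fun i _ => hM.2 i

theorem mul_apply_mem [Ring R] {m : Type*} [Fintype m] {S : Subring R} {X Y : Matrix m m R}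
    (hX : ∀ i j, X i j ∈ S) (hY : ∀ i j, Y i j ∈ S) (i j : m) : (X * Y) i j ∈ S :=
  S.sum_mem fun k _ => S.mul_mem (hX i k) (hY k j)

variable [Ring R] {r : ℕ}

def superdiag (D : ℕ) (F : Fin r → Fin r → R) : Matrix (Fin r) (Fin r) R :=
  of fun i j => if (j : ℕ) = i + D then F i j else 0

theorem superdiag_apply (D : ℕ) (F : Fin r → Fin r → R) (i j : Fin r) :
    superdiag D F i j = if (j : ℕ) = i + D then F i j else 0 := rfl

variable {D : ℕ} {X : Matrix (Fin r) (Fin r) R} {i j : Fin r}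

theorem IsUpperUnitriangular.add_superdiag (hX : X.IsUpperUnitriangular) (hD : 0 < D)
    (F : Fin r → Fin r → R) : (X + superdiag D F).IsUpperUnitriangular := by
  refine ⟨fun i j (hji : j < i) => ?_, fun i => ?_⟩
  · rw [add_apply, hX.1 hji, superdiag_apply, if_neg (by omega), add_zero]
  · rw [add_apply, hX.2, superdiag_apply, if_neg (by omega), add_zero]

theorem IsUpperUnitriangular.mul_superdiag_apply (hX : X.IsUpperUnitriangular)
    (F : Fin r → Fin r → R) (hij : (j : ℕ) ≤ i + D) :
    (X * superdiag D F) i j = superdiag D F i j := by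
  rw [mul_apply, sum_eq_single i (fun k _ hki => ?_) (by simp), hX.2, one_mul]
  rcases hki.lt_or_gt with hlt | hgt
  · rw [hX.1 hlt, zero_mul]
  · rw [superdiag_apply, if_neg (by omega), mul_zero]

theorem IsUpperUnitriangular.superdiag_mul_apply (hX : X.IsUpperUnitriangular)
    (F : Fin r → Fin r → R) (hij : (j : ℕ) ≤ i + D) :
    (superdiag D F * X) i j = superdiag D F i j := by
  rw [mul_apply, sum_eq_single j (fun k _ hkj => ?_) (by simp), hX.2, mul_one]
  rcases hkj.lt_or_gt with hlt | hgt
  · rw [superdiag_apply, if_neg (by omega), zero_mul]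
  · rw [hX.1 hgt, mul_zero]

theorem superdiag_mul_superdiag_apply (hD : 0 < D) (F G : Fin r → Fin r → R)
    (hij : (j : ℕ) ≤ i + D) : (superdiag D F * superdiag D G) i j = 0 := by
  refine (mul_apply ..).trans (sum_eq_zero fun k _ => ?_)
  simp only [superdiag_apply, mul_ite, ite_mul, zero_mul, mul_zero]
  split_ifs <;> first | omega | rfl

theorem defect_add_superdiag_apply {G₀ G₁ A : Matrix (Fin r) (Fin r) R}
    (hX : X.IsUpperUnitriangular) (hG₀ : G₀.IsUpperUnitriangular) (hA : A.IsUpperUnitriangular)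
    (hD : 0 < D) (Γ₀ Γ₁ α : Fin r → Fin r → R) (hij : (j : ℕ) ≤ i + D) :
    (X * (G₁ + superdiag D Γ₁) - (G₀ + superdiag D Γ₀) * (A + superdiag D α)) i j =
      (X * G₁ - G₀ * A) i j + superdiag D Γ₁ i j - superdiag D Γ₀ i j - superdiag D α i j := by
  simp only [mul_add, add_mul, sub_apply, add_apply, hX.mul_superdiag_apply _ hij,
    hG₀.mul_superdiag_apply _ hij, hA.superdiag_mul_apply _ hij,
    superdiag_mul_superdiag_apply hD _ _ hij]
  abel

end Matrix

open LaurentSeries Matrix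

noncomputable section

-- A candidate presentation `Mₙ = gₙ Aₙ gₙ₊₁⁻¹` with `Aₙ ∈ U_r(R[t,t⁻¹]^{pⁿ})`,
-- `gₙ ∈ U_r(R((t))^{pⁿ})`.
structure LaurentGauge (R : Type*) [Ring R] (p r : ℕ) where
  A : ℕ → Matrix (Fin r) (Fin r) (LaurentSeries R)
  g : ℕ → Matrix (Fin r) (Fin r) (LaurentSeries R)
  isUpperUnitriangular_A : ∀ n, (A n).IsUpperUnitriangular
  isUpperUnitriangular_g : ∀ n, (g n).IsUpperUnitriangular
  mem_A : ∀ n i j, A n i j ∈ HahnSeries.finiteSupportSubring ⊓ zmultiplesSubring R ((p : ℤ) ^ n)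
  mem_g : ∀ n i j, g n i j ∈ zmultiplesSubring R ((p : ℤ) ^ n)

namespace LaurentGauge

variable {R : Type*} [Ring R] {p r : ℕ} (G : LaurentGauge R p r)
  (X : ℕ → Matrix (Fin r) (Fin r) (LaurentSeries R))

def defect (i j : Fin r) (n : ℕ) : LaurentSeries R :=
  (X n * G.g (n + 1) - G.g n * G.A n) i j

def SolvesUpTo (d : ℕ) : Prop :=
  ∀ n (i j : Fin r), (j : ℕ) ≤ i + d → G.defect X i j n = 0

theorem defect_mem (hX : ∀ n i j, X n i j ∈ zmultiplesSubring R ((p : ℤ) ^ n)) (i j : Fin r)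
    (n : ℕ) : G.defect X i j n ∈ zmultiplesSubring R ((p : ℤ) ^ n) :=
  Subring.sub_mem _
    (mul_apply_mem (hX n) (fun i j => zmultiplesSubring_anti (pow_dvd_pow _ n.le_succ)
      (G.mem_g (n + 1) i j)) i j)
    (mul_apply_mem (G.mem_g n) (fun i j => (G.mem_A n i j).2) i j)

protected def one : LaurentGauge R p r where
  A _ := 1
  g _ := 1
  isUpperUnitriangular_A _ := isUpperUnitriangular_one
  isUpperUnitriangular_g _ := isUpperUnitriangular_one
  mem_A _ i j := by rw [one_apply]; split_ifs <;> simp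
  mem_g _ i j := by rw [one_apply]; split_ifs <;> simp

theorem one_solvesUpTo_zero (hX : ∀ n, (X n).IsUpperUnitriangular) :
    (LaurentGauge.one : LaurentGauge R p r).SolvesUpTo X 0 := fun n i j hij => by
  change (X n * 1 - 1 * 1 : Matrix (Fin r) (Fin r) (LaurentSeries R)) i j = 0
  rw [mul_one, mul_one, Matrix.sub_apply, sub_eq_zero]
  rcases (Nat.lt_or_eq_of_le (Nat.add_zero (i : ℕ) ▸ hij)) with hlt | heq
  · rw [(hX n).1 hlt, one_apply_ne (by omega)]
  · rw [Fin.ext heq, (hX n).2, one_apply_eq]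

variable {X} in
def improve (hX : ∀ n i j, X n i j ∈ zmultiplesSubring R ((p : ℤ) ^ n))
    (e : Fin r → Fin r → ℕ → LaurentSeries R) (D : ℕ) (hD : 0 < D) : LaurentGauge R p r where
  A n := G.A n + superdiag D fun i j => levelCorrection p (G.defect X i j) (e i j) n
  g n := G.g n + superdiag D fun i j => gauge p (G.defect X i j) (e i j) n
  isUpperUnitriangular_A n := (G.isUpperUnitriangular_A n).add_superdiag hD _
  isUpperUnitriangular_g n := (G.isUpperUnitriangular_g n).add_superdiag hD _
  mem_A n i j := by
    refine add_mem (G.mem_A n i j) ?_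
    rw [superdiag_apply]
    split_ifs
    · exact ⟨support_levelCorrection_finite .., levelCorrection_mem_zmultiplesSubring ..⟩
    · exact zero_mem _
  mem_g n i j := by
    refine add_mem (G.mem_g n i j) ?_
    rw [superdiag_apply]
    split_ifs
    · exact gauge_mem_zmultiplesSubring (G.defect_mem X hX i j) n
    · exact zero_mem _

variable {X}

theorem solvesUpTo_improve {d : ℕ} (hXu : ∀ n, (X n).IsUpperUnitriangular)
    (hX : ∀ n i j, X n i j ∈ zmultiplesSubring R ((p : ℤ) ^ n))
    (e : Fin r → Fin r → ℕ → LaurentSeries R) (hG : G.SolvesUpTo X d) :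
    (G.improve hX e (d + 1) d.succ_pos).SolvesUpTo X (d + 1) := fun n i j hij => by
  rw [defect, improve, defect_add_superdiag_apply (hXu n) (G.isUpperUnitriangular_g n)
    (G.isUpperUnitriangular_A n) d.succ_pos _ _ _ hij]
  simp only [superdiag_apply]
  rcases Nat.lt_or_eq_of_le hij with hlt | heq
  · simp only [if_neg hlt.ne]
    rw [← defect, hG n i j (by omega)]
    abel
  · simp only [if_pos heq]
    rw [← defect, eq_gauge_add_levelCorrection_sub_gauge p (G.defect X i j) (e i j) n]
    abel

theorem eq_mul_mul_inv_of_solvesUpTo {R : Type*} [CommRing R] {p r : ℕ} (G : LaurentGauge R p r)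
    {X : ℕ → Matrix (Fin r) (Fin r) (LaurentSeries R)} (hG : G.SolvesUpTo X r) (n : ℕ) :
    X n = G.g n * G.A n * (G.g (n + 1))⁻¹ := by
  have hmul : X n * G.g (n + 1) = G.g n * G.A n :=
    Matrix.ext fun i j => sub_eq_zero.1 (hG n i j (by omega))
  rw [← hmul, mul_nonsing_inv_cancel_right _ _
    ((G.isUpperUnitriangular_g _).det_eq_one ▸ isUnit_one)]

end LaurentGauge

theorem exists_laurentGauge_solvesUpTo {R : Type*} [Ring R] {p r : ℕ}
    {M N : ℕ → Matrix (Fin r) (Fin r) (LaurentSeries R)}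
    (hMu : ∀ n, (M n).IsUpperUnitriangular)
    (hM : ∀ n i j, M n i j ∈ zmultiplesSubring R ((p : ℤ) ^ n))
    (hNu : ∀ n, (N n).IsUpperUnitriangular)
    (hN : ∀ n i j, N n i j ∈ zmultiplesSubring R ((p : ℤ) ^ n))
    (d : ℕ) :
    ∃ G G' : LaurentGauge R p r, (∀ n i j m, (G'.A n i j).coeff m = (G.A n i j).coeff (-m)) ∧
      G.SolvesUpTo M d ∧ G'.SolvesUpTo N d := by
  induction d with
  | zero =>
    refine ⟨.one, .one, fun n i j m => ?_, LaurentGauge.one_solvesUpTo_zero _ hMu,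
      LaurentGauge.one_solvesUpTo_zero _ hNu⟩
    simp only [LaurentGauge.one, one_apply]
    split_ifs <;> simp
  | succ d ih =>
    obtain ⟨G, G', hrev, hG, hG'⟩ := ih
    -- each side is fed the other side's defect, so that the two corrections are reflections
    -- of each other
    refine ⟨G.improve hM (G'.defect N) (d + 1) d.succ_pos,
      G'.improve hN (G.defect M) (d + 1) d.succ_pos, fun n i j m => ?_,
      G.solvesUpTo_improve hMu hM _ hG, G'.solvesUpTo_improve hNu hN _ hG'⟩
    simp only [LaurentGauge.improve, Matrix.add_apply, HahnSeries.coeff_add, superdiag_apply, hrev]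
    split_ifs
    · rw [coeff_levelCorrection_swap]
    · rfl

end

theorem memUrLaurentSeriesPow_iff {k : Type*} [Field k] {p n r : ℕ}
    {X : Matrix (Fin r) (Fin r) (LaurentSeries k)} :
    MemUrLaurentSeriesPow k p n r X ↔
      X.IsUpperUnitriangular ∧ ∀ i j, X i j ∈ zmultiplesSubring k ((p : ℤ) ^ n) := by
  simp only [mem_zmultiplesSubring, MemUrLaurentSeriesPow, IsUpperUnitriangular, and_assoc]
  rfl

theorem memUrLaurentPolyPow_iff {k : Type*} [Field k] {p n r : ℕ}
    {X : Matrix (Fin r) (Fin r) (LaurentSeries k)} :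
    MemUrLaurentPolyPow k p n r X ↔ X.IsUpperUnitriangular ∧
      ∀ i j, X i j ∈ HahnSeries.finiteSupportSubring ⊓ zmultiplesSubring k ((p : ℤ) ^ n) := by
  simp only [Subring.mem_inf, mem_zmultiplesSubring, HahnSeries.mem_finiteSupportSubring,
    MemUrLaurentPolyPow, IsUpperUnitriangular, and_assoc]
  rfl

theorem joint_restriction_surjective_unipotent_general
    (k : Type*) [Field k] (p : ℕ)
    (r : ℕ)
    (M N : ℕ → Matrix (Fin r) (Fin r) (LaurentSeries k))
    (hM : ∀ n, MemUrLaurentSeriesPow k p n r (M n))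
    (hN : ∀ n, MemUrLaurentSeriesPow k p n r (N n)) :
    ∃ A A' g h : ℕ → Matrix (Fin r) (Fin r) (LaurentSeries k),
      (∀ n, MemUrLaurentPolyPow k p n r (A n)) ∧
      IsRevMatSeq k r A A' ∧
      (∀ n, MemUrLaurentSeriesPow k p n r (g n)) ∧
      (∀ n, MemUrLaurentSeriesPow k p n r (h n)) ∧
      (∀ n, M n = g n * A n * (g (n + 1))⁻¹) ∧
      (∀ n, N n = h n * A' n * (h (n + 1))⁻¹) := by
  simp only [memUrLaurentSeriesPow_iff] at hM hN ⊢
  obtain ⟨G, G', hrev, hG, hG'⟩ := exists_laurentGauge_solvesUpTo (fun n => (hM n).1)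
    (fun n => (hM n).2) (fun n => (hN n).1) (fun n => (hN n).2) r
  exact ⟨G.A, G'.A, G.g, G'.g,
    fun n => memUrLaurentPolyPow_iff.2 ⟨G.isUpperUnitriangular_A n, G.mem_A n⟩, hrev,
    fun n => ⟨G.isUpperUnitriangular_g n, G.mem_g n⟩,
    fun n => ⟨G'.isUpperUnitriangular_g n, G'.mem_g n⟩,
    G.eq_mul_mul_inv_of_solvesUpTo hG, G'.eq_mul_mul_inv_of_solvesUpTo hG'⟩

/-- **Joint surjectivity for unipotent bundles.**
The joint restriction map from `R¹lim Uᵣ(k[t,t⁻¹]^{pⁿ})` to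
`R¹lim Uᵣ(k((t))^{pⁿ}) × R¹lim Uᵣ(k((t⁻¹))^{pⁿ})` is surjective: for all sequences
`Mₙ ∈ Uᵣ(k((t))^{pⁿ})` and `Nₙ ∈ Uᵣ(k((s))^{pⁿ})` there are `Aₙ ∈ Uᵣ(k[t,t⁻¹]^{pⁿ})`,
`gₙ ∈ Uᵣ(k((t))^{pⁿ})` and `hₙ ∈ Uᵣ(k((s))^{pⁿ})` with `Mₙ = gₙ · Aₙ · g_{n+1}⁻¹` and
`Nₙ = hₙ · ι(Aₙ) · h_{n+1}⁻¹` for all `n`. -/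
theorem joint_restriction_surjective_unipotent
    (k : Type*) [Field k] [IsAlgClosed k] (p : ℕ) [CharP k p] (hp : 0 < p)
    (r : ℕ) (hr : 1 ≤ r)
    (M N : ℕ → Matrix (Fin r) (Fin r) (LaurentSeries k))
    (hM : ∀ n, MemUrLaurentSeriesPow k p n r (M n))
    (hN : ∀ n, MemUrLaurentSeriesPow k p n r (N n)) :
    ∃ A A' g h : ℕ → Matrix (Fin r) (Fin r) (LaurentSeries k),
      (∀ n, MemUrLaurentPolyPow k p n r (A n)) ∧
      IsRevMatSeq k r A A' ∧
      (∀ n, MemUrLaurentSeriesPow k p n r (g n)) ∧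
      (∀ n, MemUrLaurentSeriesPow k p n r (h n)) ∧
      (∀ n, M n = g n * A n * (g (n + 1))⁻¹) ∧
      (∀ n, N n = h n * A' n * (h (n + 1))⁻¹) :=
  joint_restriction_surjective_unipotent_general k p r M N hM hN
end

section
/- Let k be an algebraically closed field of characteristic p > 0. For every pair of sequences (a_n)_{n≥0} with a_n ∈ k((t)) and supp(a_n) ⊆ p^nℤ, and (b_n)_{n≥0} with b_n ∈ k((s)) and supp_s(b_n) ⊆ p^nℤ, there exist Laurent polynomials c_n ∈ k[t,t⁻¹] with supp(c_n) ⊆ p^nℤ, elements y_n ∈ k((t)) with supp(y_n) ⊆ p^nℤ, and elements z_n ∈ k((s)) with supp_s(z_n) ⊆ p^nℤ, such that for all n ≥ 0: a_n − c_n = y_n − y_{n+1} in k((t)) and b_n − ι(c_n) = z_n − z_{n+1} in k((s)). (This is the rank-one additive case of the joint surjectivity onto R¹lim_n 𝔾_a(k((t))^{p^n}) × R¹lim_n 𝔾_a(k((t⁻¹))^{p^n}).) -/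
/-!
Take for `cₙ` the Laurent polynomial made of the principal part of `aₙ` at `t = 0` and, through
`t ↦ s⁻¹`, the principal part of `bₙ` at `s = 0`. Then `aₙ - cₙ` and `bₙ - ι(cₙ)` only involve
nonnegative exponents, all divisible by `pⁿ`. Since a nonzero exponent `i` is divisible by `pᵐ`
only for `m < |i|`, the tails `yₙ = ∑_{m ≥ n} (aₘ - cₘ)` are coefficientwise finite sums and solve
`aₙ - cₙ = yₙ - yₙ₊₁`; likewise for `zₙ`. The constant term, divisible by every `pᵐ`, is handled
by the partial sums `-∑_{m < n}` instead.
-/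

open HahnSeries

theorem Int.lt_natAbs_of_pow_dvd {p m : ℕ} (hp : 1 < p) {i : ℤ} (hi : i ≠ 0)
    (h : (p : ℤ) ^ m ∣ i) : m < i.natAbs := by
  have h' : p ^ m ∣ i.natAbs := by simpa [Int.natAbs_pow] using Int.natAbs_dvd_natAbs.mpr h
  exact (Nat.lt_pow_self hp).trans_le (Nat.le_of_dvd (Int.natAbs_pos.mpr hi) h')

namespace LaurentSeries

variable {R : Type*}

section Zero

variable [Zero R]

theorem bddBelow_support (x : LaurentSeries R) : BddBelow x.support :=
  ⟨x.order, fun _ => order_le_of_coeff_ne_zero⟩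

theorem finite_support_truncLT (x : LaurentSeries R) (c : ℤ) : (truncLT c x).support.Finite := by
  obtain ⟨N, hN⟩ := x.bddBelow_support
  refine (Set.finite_Ico N c).subset ?_
  rw [support_truncLT]
  exact fun i hi => ⟨hN hi.1, hi.2⟩

/-- The substitution `T ↦ T⁻¹`, on Laurent series with finitely many nonzero coefficients. -/
def invert (x : LaurentSeries R) (hx : x.support.Finite) : LaurentSeries R where
  coeff i := x.coeff (-i)
  isPWO_support' := (hx.preimage neg_injective.injOn).isPWO

@[simp]
theorem coeff_invert (x : LaurentSeries R) (hx : x.support.Finite) (i : ℤ) :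
    (x.invert hx).coeff i = x.coeff (-i) :=
  rfl

end Zero

section AddCommGroup

variable [AddCommGroup R]

def supportDvd (q : ℤ) : AddSubgroup (LaurentSeries R) where
  carrier := {x | ∀ i ∈ x.support, q ∣ i}
  zero_mem' := by simp
  add_mem' hx hy i hi := (support_add_subset _ _ hi).elim (hx i) (hy i)
  neg_mem' hx i hi := hx i (by rwa [support_neg] at hi)

theorem truncLT_mem_supportDvd {q : ℤ} {x : LaurentSeries R} (hx : x ∈ supportDvd q) (c : ℤ) :
    truncLT c x ∈ supportDvd q :=
  fun i hi => hx i (support_truncLT_subset c x hi)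

theorem invert_mem_supportDvd {q : ℤ} {x : LaurentSeries R} (hx : x ∈ supportDvd q)
    (hfin : x.support.Finite) : invert x hfin ∈ supportDvd q :=
  fun i hi => dvd_neg.mp (hx (-i) hi)

/-- The Laurent polynomial with the principal part of `x` at `T = 0` and that of `y` at `T = ∞`. -/
def jointPrincipalPart (x y : LaurentSeries R) : LaurentSeries R :=
  truncLT 0 x + invert (truncLT 0 y) (finite_support_truncLT y 0)

theorem finite_support_jointPrincipalPart (x y : LaurentSeries R) :
    (jointPrincipalPart x y).support.Finite :=
  ((finite_support_truncLT x 0).union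
    ((finite_support_truncLT y 0).preimage neg_injective.injOn)).subset (support_add_subset _ _)

theorem jointPrincipalPart_mem_supportDvd {q : ℤ} {x y : LaurentSeries R}
    (hx : x ∈ supportDvd q) (hy : y ∈ supportDvd q) : jointPrincipalPart x y ∈ supportDvd q :=
  add_mem (truncLT_mem_supportDvd hx 0) (invert_mem_supportDvd (truncLT_mem_supportDvd hy 0) _)

theorem invert_jointPrincipalPart (x y : LaurentSeries R) :
    invert (jointPrincipalPart x y) (finite_support_jointPrincipalPart x y) =
      jointPrincipalPart y x := by
  ext i
  simp [jointPrincipalPart, add_comm]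

theorem nonneg_of_mem_support_sub_jointPrincipalPart {x y : LaurentSeries R} {i : ℤ}
    (hi : i ∈ (x - jointPrincipalPart x y).support) : 0 ≤ i := by
  contrapose! hi
  simp [jointPrincipalPart, hi, hi.asymm]

theorem exists_eq_sub_succ_of_mem_supportDvd {p : ℕ} (hp : 1 < p) (d : ℕ → LaurentSeries R)
    (hd : ∀ m, d m ∈ supportDvd ((p : ℤ) ^ m)) (N : ℤ) (hN : ∀ m, ∀ i ∈ (d m).support, N ≤ i) :
    ∃ y : ℕ → LaurentSeries R,
      (∀ n, y n ∈ supportDvd ((p : ℤ) ^ n)) ∧ ∀ n, d n = y n - y (n + 1) := by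
  have hvanish : ∀ m i, i ≠ 0 → i.natAbs ≤ m → (d m).coeff i = 0 := fun m i hi hm => by
    by_contra h
    exact hm.not_gt (Int.lt_natAbs_of_pow_dvd hp hi (hd m i h))
  let f : ℕ → ℤ → R := fun n i =>
    if i = 0 then -∑ m ∈ Finset.range n, (d m).coeff 0
    else ∑ m ∈ Finset.Ico n i.natAbs, (d m).coeff i
  have hf : ∀ n, BddBelow (Function.support (f n)) := fun n => ⟨min N 0, fun i hi => by
    by_cases h0 : i = 0
    · exact h0 ▸ min_le_right N 0
    · obtain ⟨m, -, hm⟩ := Finset.exists_ne_zero_of_sum_ne_zero (by simpa [f, h0] using hi)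
      exact (min_le_left N 0).trans (hN m i hm)⟩
  refine ⟨fun n => ofSuppBddBelow (f n) (hf n), fun n i hi => ?_, fun n => ?_⟩
  · by_cases h0 : i = 0
    · exact h0 ▸ dvd_zero _
    · obtain ⟨m, hm, hne⟩ := Finset.exists_ne_zero_of_sum_ne_zero (by simpa [f, h0] using hi)
      exact (pow_dvd_pow _ (Finset.mem_Ico.mp hm).1).trans (hd m i hne)
  · ext i
    by_cases h0 : i = 0
    · simp [f, h0, Finset.sum_range_succ]
    by_cases hn : n < i.natAbs
    · simp [f, h0, Finset.sum_eq_sum_Ico_succ_bot hn]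
    · simp [f, h0, hvanish n i h0 (not_lt.mp hn), Finset.Ico_eq_empty hn,
        Finset.Ico_eq_empty (fun h => hn (Nat.lt_of_succ_lt h))]

end AddCommGroup

end LaurentSeries

open LaurentSeries

theorem joint_restriction_surjective_rank_one_additive_general
    (k : Type*) [Field k] (p : ℕ) [CharP k p] (hp : 0 < p)
    (a b : ℕ → LaurentSeries k)
    (ha : ∀ n, ∀ i ∈ (a n).support, ((p : ℤ) ^ n) ∣ i)
    (hb : ∀ n, ∀ i ∈ (b n).support, ((p : ℤ) ^ n) ∣ i) :
    ∃ c c' y z : ℕ → LaurentSeries k,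
      (∀ n, (c n).support.Finite ∧ ∀ i ∈ (c n).support, ((p : ℤ) ^ n) ∣ i) ∧
      (∀ n i, (c' n).coeff i = (c n).coeff (-i)) ∧
      (∀ n, ∀ i ∈ (y n).support, ((p : ℤ) ^ n) ∣ i) ∧
      (∀ n, ∀ i ∈ (z n).support, ((p : ℤ) ^ n) ∣ i) ∧
      (∀ n, a n - c n = y n - y (n + 1)) ∧
      (∀ n, b n - c' n = z n - z (n + 1)) := by
  have hp1 : 1 < p := (CharP.char_prime_of_ne_zero k hp.ne').one_lt
  let c n := jointPrincipalPart (a n) (b n)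
  have hc n : c n ∈ supportDvd ((p : ℤ) ^ n) := jointPrincipalPart_mem_supportDvd (ha n) (hb n)
  let c' n := invert (c n) (finite_support_jointPrincipalPart _ _)
  obtain ⟨y, hy, hay⟩ := exists_eq_sub_succ_of_mem_supportDvd hp1 (fun n => a n - c n)
    (fun n => sub_mem (ha n) (hc n)) 0 (fun _ _ => nonneg_of_mem_support_sub_jointPrincipalPart)
  have hc' n : c' n = jointPrincipalPart (b n) (a n) := invert_jointPrincipalPart _ _
  obtain ⟨z, hz, hbz⟩ := exists_eq_sub_succ_of_mem_supportDvd hp1 (fun n => b n - c' n)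
    (fun n => hc' n ▸ sub_mem (hb n) (jointPrincipalPart_mem_supportDvd (hb n) (ha n))) 0
    (fun n _ hi => nonneg_of_mem_support_sub_jointPrincipalPart (hc' n ▸ hi))
  exact ⟨c, c', y, z, fun n => ⟨finite_support_jointPrincipalPart _ _, hc n⟩, fun _ _ => rfl,
    hy, hz, hay, hbz⟩

/-- **Rank-one additive case of the joint surjectivity.**
For every pair of sequences `(aₙ)` in `k((t))` and `(bₙ)` in `k((s))` with supports in
`pⁿℤ`, there exist Laurent polynomials `cₙ ∈ k[t,t⁻¹]` (elements of `k((t))` with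
finite support, here recorded together with their images `c'ₙ = ι(cₙ) ∈ k((s))` under
`t ↦ s⁻¹`, i.e. with reversed coefficients) with `supp(cₙ) ⊆ pⁿℤ`, and elements
`yₙ ∈ k((t))`, `zₙ ∈ k((s))` with supports in `pⁿℤ`, such that
`aₙ − cₙ = yₙ − y_{n+1}` in `k((t))` and `bₙ − ι(cₙ) = zₙ − z_{n+1}` in `k((s))`
for all `n`. -/
theorem joint_restriction_surjective_rank_one_additive
    (k : Type*) [Field k] [IsAlgClosed k] (p : ℕ) [CharP k p] (hp : 0 < p)
    (a b : ℕ → LaurentSeries k)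
    (ha : ∀ n, ∀ i ∈ (a n).support, ((p : ℤ) ^ n) ∣ i)
    (hb : ∀ n, ∀ i ∈ (b n).support, ((p : ℤ) ^ n) ∣ i) :
    ∃ c c' y z : ℕ → LaurentSeries k,
      (∀ n, (c n).support.Finite ∧ ∀ i ∈ (c n).support, ((p : ℤ) ^ n) ∣ i) ∧
      (∀ n i, (c' n).coeff i = (c n).coeff (-i)) ∧
      (∀ n, ∀ i ∈ (y n).support, ((p : ℤ) ^ n) ∣ i) ∧
      (∀ n, ∀ i ∈ (z n).support, ((p : ℤ) ^ n) ∣ i) ∧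
      (∀ n, a n - c n = y n - y (n + 1)) ∧
      (∀ n, b n - c' n = z n - z (n + 1)) :=
  joint_restriction_surjective_rank_one_additive_general k p hp a b ha hb
end

section
/- Let k be an algebraically closed field of characteristic p > 0 and let G be a finite group. Then every irreducible finite-dimensional k-linear representation of G has dimension 1 if and only if G has a normal Sylow p-subgroup P such that the quotient group G/P is abelian. -/
/-!
If `P` is a normal `p`-subgroup of `G` and `V` is irreducible, the `P`-invariants of `V` are a
nonzero (a `p`-group acting on an `𝔽_p`-vector space fixes a nonzero vector) `G`-stable subspace,
so `P` acts trivially and `V` is an irreducible representation of the abelian group `G ⧸ P`;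
by Schur's lemma it is one-dimensional.

Conversely, if all irreducible representations are one-dimensional, let `N` be the common kernel
of all linear characters `G →* kˣ`. Then `G ⧸ N` is abelian, and `p ∤ [G : N]` because `kˣ` has
no elements of order `p`. An element `x ∈ N` acts trivially on every irreducible representation,
so by induction on the dimension `ρ x - 1` is nilpotent on the regular representation `ρ`; in
characteristic `p` this gives `x ^ p ^ n = 1`. Hence `N` is a normal Sylow `p`-subgroup.
-/

/-- The quotient group `G ⧸ P` (for a normal subgroup `P`) is abelian. -/
def QuotientIsAbelian (G : Type) [Group G] (P : Subgroup G) (hP : P.Normal) : Prop :=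
  haveI := hP
  ∀ a b : G ⧸ P, a * b = b * a

universe u

open Module

theorem Module.End.pow_add_eq_zero_of_le_comap {R M : Type*} [Ring R] [AddCommGroup M]
    [Module R M] {f : Module.End R M} {W : Submodule R M} (hW : W ≤ W.comap f) {a b : ℕ}
    (ha : f.restrict hW ^ a = 0) (hb : W.mapQ W f hW ^ b = 0) : f ^ (a + b) = 0 := by
  ext v
  have hv : (f ^ b) v ∈ W := by
    have := LinearMap.congr_fun hb (W.mkQ v)
    rw [← Submodule.mapQ_pow] at this
    simpa [Submodule.Quotient.mk_eq_zero] using this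
  have := LinearMap.congr_fun ha ⟨_, hv⟩
  rw [Module.End.pow_restrict] at this
  rw [pow_add, Module.End.mul_apply]
  simpa using congrArg Subtype.val this

theorem pow_char_pow_eq_one_of_sub_one_pow_eq_zero {R : Type*} [Ring R] (p : ℕ) [Fact p.Prime]
    [CharP R p] {a : R} {n : ℕ} (h : (a - 1) ^ n = 0) : a ^ p ^ n = 1 := by
  have hpow : (a - 1) ^ p ^ n = 0 :=
    pow_eq_zero_of_le (Nat.lt_pow_self (Fact.out : p.Prime).one_lt).le h
  rwa [sub_pow_char_pow_of_commute p n (Commute.one_right a), one_pow, sub_eq_zero] at hpow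

theorem IsPGroup.exists_ne_zero_forall_smul_eq {p : ℕ} [Fact p.Prime] {H A : Type*} [Group H]
    [Finite H] (hH : IsPGroup p H) [AddCommGroup A] [Module (ZMod p) A] [DistribMulAction H A]
    {a : A} (ha : a ≠ 0) : ∃ b : A, b ≠ 0 ∧ ∀ h : H, h • b = b := by
  -- The `𝔽_p`-span of the orbit of `a` is a finite `H`-set of cardinality divisible by `p`.
  let S : Submodule (ZMod p) A := Submodule.span (ZMod p) (Set.range fun h : H => h • a)
  have : Module.Finite (ZMod p) S := .span_of_finite (ZMod p) (Set.finite_range _)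
  have : Finite S := Module.finite_of_finite (ZMod p)
  let T : SubMulAction H A :=
    { carrier := S
      smul_mem' h := by
        have hS : S ≤ S.comap ((DistribSMul.toAddMonoidHom A h).toZModLinearMap p) := by
          refine Submodule.span_le.mpr ?_
          rintro _ ⟨g, rfl⟩
          exact Submodule.subset_span ⟨h * g, mul_smul h g a⟩
        exact fun x hx => hS hx }
  have haS : a ∈ S := Submodule.subset_span ⟨1, one_smul H a⟩
  have hpT : p ∣ Nat.card T := by
    have := addOrderOf_dvd_natCard (⟨a, haS⟩ : S)
    rwa [addOrderOf_eq_prime (Subtype.ext (ZModModule.char_nsmul_eq_zero p a))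
      (by simpa using ha)] at this
  obtain ⟨b, hb, hb0⟩ := hH.exists_fixed_point_of_prime_dvd_card_of_fixed_point T hpT
    (a := ⟨0, S.zero_mem⟩) fun h => Subtype.ext (smul_zero h)
  exact ⟨b, fun h => hb0 (Subtype.ext h.symm), fun h => congrArg Subtype.val (hb h)⟩

namespace Representation

theorem invariants_ne_bot_of_isPGroup {k G V : Type*} [CommRing k] [Group G] [AddCommGroup V]
    [Module k V] [Nontrivial V] (p : ℕ) [CharP k p] [Fact p.Prime] [Finite G] (hG : IsPGroup p G)
    (ρ : Representation k G V) : ρ.invariants ≠ ⊥ := by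
  have : Module (ZMod p) V := AddCommGroup.zmodModule fun v => by
    rw [← Nat.cast_smul_eq_nsmul k, CharP.cast_eq_zero, zero_smul]
  let _ : DistribMulAction G V := .compHom V ρ
  obtain ⟨v₀, hv₀⟩ := exists_ne (0 : V)
  obtain ⟨v, hv, hfix⟩ := hG.exists_ne_zero_forall_smul_eq hv₀
  exact (Submodule.ne_bot_iff _).2 ⟨v, hfix, hv⟩

theorem ofMulAction_self_eq_one_iff {k G : Type*} [Semiring k] [Nontrivial k] [Monoid G]
    {g : G} : ofMulAction k G G g = 1 ↔ g = 1 := by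
  refine ⟨fun h => ?_, fun h => h ▸ map_one _⟩
  have : ofMulAction k G G g (MonoidAlgebra.single 1 1) = MonoidAlgebra.single 1 (1 : k) := by
    rw [h, Module.End.one_apply]
  rw [ofMulAction_single, smul_eq_mul, mul_one] at this
  exact MonoidAlgebra.single_left_injective one_ne_zero this

variable {k G : Type*} {V : Type u} [Field k] [Group G] [AddCommGroup V] [Module k V]

theorem isIrreducible_iff (ρ : Representation k G V) :
    ρ.IsIrreducible ↔ Nontrivial V ∧
      ∀ W : Submodule k V, (∀ (g : G) (v : V), v ∈ W → ρ g v ∈ W) → W = ⊥ ∨ W = ⊤ := by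
  constructor
  · intro h
    refine ⟨?_, fun W hW => ?_⟩
    · have : Nontrivial (Submodule k V) :=
        (Subrepresentation.toSubmodule_injective (ρ := ρ)).nontrivial
      exact (Submodule.nontrivial_iff k).mp this
    · exact (eq_bot_or_eq_top (⟨W, hW⟩ : Subrepresentation ρ)).imp
        (congrArg Subrepresentation.toSubmodule) (congrArg Subrepresentation.toSubmodule)
  · rintro ⟨hV, h⟩
    exact
      { exists_pair_ne := ⟨⊥, ⊤, fun e => bot_ne_top (congrArg Subrepresentation.toSubmodule e)⟩
        eq_bot_or_eq_top W := (h W.toSubmodule W.apply_mem_toSubmodule).imp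
          (fun e => Subrepresentation.ext e) (fun e => Subrepresentation.ext e) }

theorem isIrreducible_ofQuotient_iff (ρ : Representation k G V) (S : Subgroup G) [S.Normal]
    [IsTrivial (ρ.comp S.subtype)] : (ρ.ofQuotient S).IsIrreducible ↔ ρ.IsIrreducible := by
  simp only [isIrreducible_iff, QuotientGroup.mk_surjective.forall, ofQuotient_coe_apply]

theorem isTrivial_comp_subtype_of_isPGroup (p : ℕ) [CharP k p] [Fact p.Prime] [Finite G]
    (ρ : Representation k G V) [ρ.IsIrreducible] (P : Subgroup G) [P.Normal]
    (hP : IsPGroup p P) : IsTrivial (ρ.comp P.subtype) := by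
  obtain ⟨hV, hirr⟩ := ρ.isIrreducible_iff.mp inferInstance
  have hstable : ∀ (g : G) (v : V), v ∈ invariants (ρ.comp P.subtype) →
      ρ g v ∈ invariants (ρ.comp P.subtype) := by
    intro g v hv h
    have hconj : g⁻¹ * h * g ∈ P := ‹P.Normal›.conj_mem' _ h.2 g
    calc ρ h (ρ g v) = ρ g (ρ (g⁻¹ * h * g) v) := by
          simp only [← Module.End.mul_apply, ← map_mul]; group
      _ = ρ g v := congrArg (ρ g) (hv ⟨_, hconj⟩)
  have htop := (hirr _ hstable).resolve_left (invariants_ne_bot_of_isPGroup p hP _)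
  exact ⟨fun h => LinearMap.ext fun v => (Submodule.eq_top_iff'.mp htop v) h⟩

theorem finrank_eq_one_of_isPGroup_of_isMulCommutative [IsAlgClosed k] [FiniteDimensional k V]
    (p : ℕ) [CharP k p] [Fact p.Prime] [Finite G] (ρ : Representation k G V) [ρ.IsIrreducible]
    (P : Subgroup G) [P.Normal] [IsMulCommutative (G ⧸ P)] (hP : IsPGroup p P) :
    finrank k V = 1 := by
  have := ρ.isTrivial_comp_subtype_of_isPGroup p P hP
  have : (ρ.ofQuotient P).IsIrreducible := (isIrreducible_ofQuotient_iff ρ P).mpr inferInstance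
  exact IsIrreducible.finrank_eq_one_of_isMulCommutative (ρ.ofQuotient P)

theorem exists_monoidHom_units_apply_eq_smul_id [FiniteDimensional k V]
    (ρ : Representation k G V) (hV : finrank k V = 1) :
    ∃ χ : G →* kˣ, ∀ g, ρ g = (χ g : k) • LinearMap.id := by
  refine ⟨(Units.map (LinearMap.det : Module.End k V →* k)).comp ρ.asGroupHom, fun g => ?_⟩
  obtain ⟨c, hc, -⟩ := (ρ g).existsUnique_eq_smul_id_of_finrank_eq_one hV
  simp [asGroupHom_apply, hc, LinearMap.det_smul, hV]

theorem sub_one_pow_finrank_eq_zero [FiniteDimensional k V] {x : G}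
    (hx : ∀ (W : Type u) [AddCommGroup W] [Module k W] [FiniteDimensional k W]
      (σ : Representation k G W), σ.IsIrreducible → σ x = 1)
    (ρ : Representation k G V) : (ρ x - 1) ^ finrank k V = 0 := by
  induction hn : finrank k V using Nat.strong_induction_on generalizing V with
  | _ n ih =>
  rcases subsingleton_or_nontrivial V with hV | hV
  · exact Subsingleton.elim _ _
  by_cases hρ : ρ.IsIrreducible
  · rw [hx V ρ hρ, sub_self, zero_pow (hn ▸ finrank_pos.ne')]
  obtain ⟨W, hW, hbot, htop⟩ : ∃ W : Submodule k V,
      (∀ (g : G) (v : V), v ∈ W → ρ g v ∈ W) ∧ W ≠ ⊥ ∧ W ≠ ⊤ := by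
    simpa [isIrreducible_iff, hV, not_or] using hρ
  have hle (g : G) : W ≤ W.comap (ρ g) := hW g
  have hW0 : finrank k W ≠ 0 := fun h => hbot (Submodule.finrank_eq_zero.mp h)
  have hsum := W.finrank_quotient_add_finrank
  have hsub := ih _ (hn ▸ Submodule.finrank_lt htop) (ρ.subrepresentation W hle) rfl
  have hquot := ih _ (by omega) (ρ.quotient W hle) rfl
  rw [← hn, ← hsum, add_comm]
  refine Module.End.pow_add_eq_zero_of_le_comap (f := ρ x - 1)
    (fun v hv => by simpa using W.sub_mem (hW x v hv) hv) ?_ ?_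
  · convert hsub using 2
    ext
    simp
  · convert hquot using 2
    ext
    simp

end Representation

def linearCharacterKernel (k G : Type*) [Monoid k] [Group G] : Subgroup G :=
  ⨅ χ : G →* kˣ, χ.ker

section linearCharacterKernel

variable {k G : Type*} [Group G]

theorem mem_linearCharacterKernel [Monoid k] {x : G} :
    x ∈ linearCharacterKernel k G ↔ ∀ χ : G →* kˣ, χ x = 1 := by
  simp [linearCharacterKernel, Subgroup.mem_iInf]

instance [Monoid k] : (linearCharacterKernel k G).Normal :=
  Subgroup.normal_iInf_normal fun χ => χ.normal_ker

theorem commutator_le_linearCharacterKernel [CommMonoid k] :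
    commutator G ≤ linearCharacterKernel k G :=
  le_iInf fun χ => Abelianization.commutator_subset_ker χ

theorem not_dvd_index_linearCharacterKernel [CommRing k] [IsReduced k] (p : ℕ) [Fact p.Prime]
    [CharP k p] [Finite G] : ¬ p ∣ (linearCharacterKernel k G).index := by
  intro hdvd
  rw [Subgroup.index_eq_card] at hdvd
  obtain ⟨y, hy⟩ := exists_prime_orderOf_dvd_card' p hdvd
  obtain ⟨x, rfl⟩ := QuotientGroup.mk_surjective y
  have hxp : x ^ p ∈ linearCharacterKernel k G := by
    rw [← QuotientGroup.eq_one_iff, QuotientGroup.mk_pow, ← hy, pow_orderOf_eq_one]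
  have hx : x ∈ linearCharacterKernel k G := mem_linearCharacterKernel.mpr fun χ =>
    Units.ext <| frobenius_inj k p <| by
      simpa [frobenius_def] using congrArg Units.val (mem_linearCharacterKernel.mp hxp χ)
  rw [(QuotientGroup.eq_one_iff x).mpr hx, orderOf_one] at hy
  exact (Fact.out : p.Prime).ne_one hy.symm

end linearCharacterKernel

theorem isPGroup_linearCharacterKernel {k G : Type u} [Field k] [Group G] [Finite G] (p : ℕ)
    [Fact p.Prime] [CharP k p]
    (h : ∀ (V : Type u) [AddCommGroup V] [Module k V] [FiniteDimensional k V]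
      (ρ : Representation k G V), ρ.IsIrreducible → finrank k V = 1) :
    IsPGroup p (linearCharacterKernel k G) := by
  rintro ⟨x, hx⟩
  have hx1 (V : Type u) [AddCommGroup V] [Module k V] [FiniteDimensional k V]
      (σ : Representation k G V) (hσ : σ.IsIrreducible) : σ x = 1 := by
    obtain ⟨χ, hχ⟩ := σ.exists_monoidHom_units_apply_eq_smul_id (h V σ hσ)
    simp [hχ, mem_linearCharacterKernel.mp hx χ, Module.End.one_eq_id]
  have := charP_of_injective_algebraMap
    (algebraMap k (Module.End k (MonoidAlgebra k G))).injective p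
  refine ⟨finrank k (MonoidAlgebra k G), Subtype.ext ?_⟩
  rw [Subgroup.coe_pow, Subgroup.coe_one, ← Representation.ofMulAction_self_eq_one_iff (k := k),
    map_pow]
  exact pow_char_pow_eq_one_of_sub_one_pow_eq_zero p
    (Representation.sub_one_pow_finrank_eq_zero hx1 _)

/-- **Characterization of finite groups all of whose irreducible representations in
characteristic `p` have dimension one (Proposition 4.2).**
Let `k` be an algebraically closed field of characteristic `p > 0` and `G` a finite
group.  Every irreducible finite-dimensional `k`-linear representation of `G` has
dimension `1` iff `G` has a normal Sylow `p`-subgroup `P` (a subgroup whose order is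
the largest power of `p` dividing `|G|`) with `G ⧸ P` abelian. -/
theorem all_irreducible_reps_one_dimensional_iff
    (k : Type) [Field k] [IsAlgClosed k] (p : ℕ) [CharP k p] (hp : 0 < p)
    (G : Type) [Group G] [Finite G] :
    (∀ (V : Type) [AddCommGroup V] [Module k V] [FiniteDimensional k V]
        (ρ : Representation k G V),
        Nontrivial V →
        (∀ W : Submodule k V, (∀ (g : G) (v : V), v ∈ W → ρ g v ∈ W) →
          W = ⊥ ∨ W = ⊤) →
        Module.finrank k V = 1)
      ↔ ∃ (P : Subgroup G) (hP : P.Normal),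
          Nat.card P = p ^ ((Nat.card G).factorization p) ∧
          QuotientIsAbelian G P hP := by
  have : NeZero p := ⟨hp.ne'⟩
  have := CharP.char_is_prime_of_pos k p
  constructor
  · intro h
    have hN := isPGroup_linearCharacterKernel p fun V _ _ _ ρ hρ =>
      h V ρ (ρ.isIrreducible_iff.mp hρ).1 (ρ.isIrreducible_iff.mp hρ).2
    refine ⟨linearCharacterKernel k G, inferInstance,
      Sylow.card_eq_multiplicity (hN.toSylow (not_dvd_index_linearCharacterKernel p)), ?_⟩
    exact (Subgroup.Normal.quotient_commutative_iff_commutator_le.mpr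
      commutator_le_linearCharacterKernel).is_comm.comm
  · rintro ⟨P, hP, hcard, hab⟩ V _ _ _ ρ hV hirr
    have : ρ.IsIrreducible := ρ.isIrreducible_iff.mpr ⟨hV, hirr⟩
    have : IsMulCommutative (G ⧸ P) := ⟨⟨hab⟩⟩
    exact ρ.finrank_eq_one_of_isPGroup_of_isMulCommutative p P (IsPGroup.of_card hcard)
end
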